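/- arXiv:1607.04031 — 7 statements merged into one kernel-verified Lean document; each statement's English description precedes it below -/
import Mathlib

section
/- The cardinalities of T^-_j and T^+_j satisfy the crossing recurrence: #T^-_1 = n_1 − 1, #T^+_1 = 1, and for 2 ≤ j ≤ α, #T^-_j = (2^{n_j−1} − 1)·#T^-_{j−1} + 2^{n_j−2}·#T^+_{j−1} and #T^+_j = 2^{n_j−1}·#T^-_{j−1} + 2^{n_j−2}·#T^+_{j−1}. -/
/-! A tuple in `T^±_{j+1}` is a tuple of `T^+_j` or of `T^-_j` followed by one more block
`S_{j+1}`. Which blocks may follow depends only on that sign (after `T^+_j`, P3 forces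
`0 ∈ S_{j+1}`) and on the sign wanted for the longer tuple, so `#T^±_{j+1}` is a sum of two
products. Counting the admissible blocks is counting subsets of `{0,…,n−1}` between a forced
and an allowed set (`Finset.card_Icc_finset`): `2^{n−1} − 1` nonempty ones avoiding `n − 1`,
`2^{n−1}` containing `n − 1`, and `2^{n−2}` each containing `0` and avoiding resp. containing
`n − 1`. -/

/-- The set `T^+_j` (for `pos = true`) resp. `T^-_j` (for `pos = false`) of tuples
`(S_1,…,S_j)` (indexed here from `0`) of nonempty subsets `S_k ⊆ {0,…,n_k−1}`
satisfying P1, P3 (for `k < j`), with `n_j − 1 ∈ S_j` (resp. `n_j − 1 ∉ S_j`),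
padded with `∅` beyond position `j`. -/
def Tpm (n : ℕ → ℕ) (j : ℕ) (pos : Bool) : Set (ℕ → Finset ℕ) :=
  {S | (∀ k, j ≤ k → S k = ∅) ∧
       (∀ k, k < j → S k ⊆ Finset.range (n k)) ∧
       (∀ k, k < j → (S k).Nonempty) ∧
       (0 < j → (S 0).card = 1) ∧
       (∀ k, k + 1 < j → n k - 1 ∈ S k → 0 ∈ S (k + 1)) ∧
       (0 < j → (n (j - 1) - 1 ∈ S (j - 1) ↔ pos = true))}

open Finset Function

/-- The blocks `A ⊆ range m` that may follow a block containing its maximum (`b = true`) or not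
(`b = false`), and that contain their own maximum `m - 1` iff `pos`. -/
def nextBlocks (m : ℕ) (b pos : Bool) : Finset (Finset ℕ) :=
  (range m).powerset.filter fun A => A.Nonempty ∧ (b → 0 ∈ A) ∧ (m - 1 ∈ A ↔ pos)

lemma mem_nextBlocks {m : ℕ} {b pos : Bool} {A : Finset ℕ} :
    A ∈ nextBlocks m b pos ↔
      A ⊆ range m ∧ A.Nonempty ∧ (b → 0 ∈ A) ∧ (m - 1 ∈ A ↔ pos) := by
  simp [nextBlocks]

section
variable {m : ℕ}

lemma nextBlocks_false_false :
    nextBlocks m false false = (range (m - 1)).powerset.erase ∅ := by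
  ext A
  simp only [mem_nextBlocks, mem_erase, mem_powerset, subset_iff, mem_range]
  grind

lemma nextBlocks_false_true : nextBlocks m false true = Icc {m - 1} (range m) := by
  ext A
  simp only [mem_nextBlocks, mem_Icc, subset_iff, mem_range, mem_singleton]
  grind

lemma nextBlocks_true_false : nextBlocks m true false = Icc {0} (range (m - 1)) := by
  ext A
  simp only [mem_nextBlocks, mem_Icc, subset_iff, mem_range, mem_singleton]
  grind

lemma nextBlocks_true_true : nextBlocks m true true = Icc {0, m - 1} (range m) := by
  ext A
  simp only [mem_nextBlocks, mem_Icc, subset_iff, mem_range, mem_singleton, mem_insert]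
  grind

lemma card_nextBlocks_false_false : #(nextBlocks m false false) = 2 ^ (m - 1) - 1 := by
  rw [nextBlocks_false_false, card_erase_of_mem (empty_mem_powerset _), card_powerset,
    card_range]

lemma card_nextBlocks_false_true (hm : 0 < m) : #(nextBlocks m false true) = 2 ^ (m - 1) := by
  rw [nextBlocks_false_true, card_Icc_finset (by simpa using hm), card_range, card_singleton]

lemma card_nextBlocks_true_false (hm : 2 ≤ m) : #(nextBlocks m true false) = 2 ^ (m - 2) := by
  have hsub : {0} ⊆ range (m - 1) := by rw [singleton_subset_iff, mem_range]; omega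
  rw [nextBlocks_true_false, card_Icc_finset hsub, card_range, card_singleton, Nat.sub_sub]

lemma card_nextBlocks_true_true (hm : 2 ≤ m) : #(nextBlocks m true true) = 2 ^ (m - 2) := by
  have hsub : {0, m - 1} ⊆ range m := by
    intro x; simp only [mem_insert, mem_singleton, mem_range]; omega
  rw [nextBlocks_true_true, card_Icc_finset hsub, card_range, card_pair (by omega)]

end

def truncateAt (i : ℕ) (S : ℕ → Finset ℕ) : ℕ → Finset ℕ :=
  fun k => if k < i then S k else ∅

section
variable {n : ℕ → ℕ} {i j : ℕ} {b pos : Bool} {S T : ℕ → Finset ℕ} {A : Finset ℕ}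

lemma update_mem_Tpm_succ (hi : 0 < i) (hT : T ∈ Tpm n i b) (hA : A ∈ nextBlocks (n i) b pos) :
    update T i A ∈ Tpm n (i + 1) pos := by
  obtain ⟨hT_empty, hT_sub, hT_ne, hT_zero, hT_cross, hT_last⟩ := hT
  obtain ⟨hA_sub, hA_ne, hA_zero, hA_last⟩ := mem_nextBlocks.1 hA
  refine ⟨fun k hk => ?_, fun k hk => ?_, fun k hk => ?_, fun _ => ?_, fun k hk => ?_,
    fun _ => ?_⟩
  · rw [update_of_ne (by omega)]; exact hT_empty k (by omega)
  · rcases (Nat.lt_succ_iff_lt_or_eq.1 hk) with hk | rfl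
    · rw [update_of_ne hk.ne]; exact hT_sub k hk
    · rwa [update_self]
  · rcases (Nat.lt_succ_iff_lt_or_eq.1 hk) with hk | rfl
    · rw [update_of_ne hk.ne]; exact hT_ne k hk
    · rwa [update_self]
  · rw [update_of_ne hi.ne]; exact hT_zero hi
  · rw [update_of_ne (by omega)]
    rcases (Nat.lt_succ_iff_lt_or_eq.1 hk) with hk | hk
    · rw [update_of_ne hk.ne]; exact hT_cross k hk
    · subst hk
      intro h
      rw [update_self]
      exact hA_zero ((hT_last hi).1 h)
  · rwa [Nat.add_sub_cancel, update_self]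

lemma truncateAt_mem_Tpm (hi : 0 < i) (hS : S ∈ Tpm n (i + 1) pos) :
    truncateAt i S ∈ Tpm n i (decide (n (i - 1) - 1 ∈ S (i - 1))) := by
  obtain ⟨hS_empty, hS_sub, hS_ne, hS_zero, hS_cross, -⟩ := hS
  refine ⟨fun k hk => if_neg (by omega), fun k hk => ?_, fun k hk => ?_, fun _ => ?_,
    fun k hk => ?_, fun _ => ?_⟩ <;> simp only [truncateAt]
  · rw [if_pos hk]; exact hS_sub k (by omega)
  · rw [if_pos hk]; exact hS_ne k (by omega)
  · rw [if_pos hi]; exact hS_zero (by omega)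
  · rw [if_pos (by omega), if_pos hk]; exact hS_cross k (by omega)
  · rw [if_pos (by omega), decide_eq_true_iff]

lemma apply_mem_nextBlocks (hi : 0 < i) (hS : S ∈ Tpm n (i + 1) pos) :
    S i ∈ nextBlocks (n i) (decide (n (i - 1) - 1 ∈ S (i - 1))) pos := by
  obtain ⟨-, hS_sub, hS_ne, -, hS_cross, hS_last⟩ := hS
  refine mem_nextBlocks.2
    ⟨hS_sub i (by omega), hS_ne i (by omega), fun h => ?_, hS_last (by omega)⟩
  simpa [Nat.sub_add_cancel hi] using hS_cross (i - 1) (by omega) (of_decide_eq_true h)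

lemma update_truncateAt (hS : S ∈ Tpm n (i + 1) pos) :
    update (truncateAt i S) i (S i) = S := by
  ext1 k
  rcases lt_trichotomy k i with hk | rfl | hk
  · rw [update_of_ne hk.ne, truncateAt, if_pos hk]
  · exact update_self ..
  · rw [update_of_ne hk.ne', truncateAt, if_neg (by omega), hS.1 k hk]

lemma Tpm_succ_eq_image (hi : 0 < i) :
    Tpm n (i + 1) pos = (fun p => update p.1 i p.2) ''
      (Tpm n i false ×ˢ ↑(nextBlocks (n i) false pos) ∪
        Tpm n i true ×ˢ ↑(nextBlocks (n i) true pos)) := by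
  ext S
  constructor
  · intro hS
    refine ⟨(truncateAt i S, S i), ?_, update_truncateAt hS⟩
    have hmem := And.intro (truncateAt_mem_Tpm hi hS) (apply_mem_nextBlocks hi hS)
    generalize decide (n (i - 1) - 1 ∈ S (i - 1)) = b at hmem
    cases b
    · exact Or.inl hmem
    · exact Or.inr hmem
  · rintro ⟨⟨T, A⟩, ⟨hT, hA⟩ | ⟨hT, hA⟩, rfl⟩ <;>
      exact update_mem_Tpm_succ hi hT hA

lemma update_injOn :
    Set.InjOn (fun p : (ℕ → Finset ℕ) × Finset ℕ => update p.1 i p.2)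
      {p | p.1 i = ∅} := by
  rintro ⟨T, A⟩ hT ⟨T', A'⟩ hT' h
  have hA : A = A' := by simpa using congrFun h i
  refine Prod.ext (funext fun k => ?_) hA
  rcases eq_or_ne k i with rfl | hk
  · exact hT.trans hT'.symm
  · simpa [hk] using congrFun h k

lemma Tpm_finite : (Tpm n j pos).Finite := by
  have hpi : (Set.univ.pi fun k : Fin j => (↑(range (n k)).powerset : Set (Finset ℕ))).Finite :=
    Set.Finite.pi fun _ => finite_toSet _
  refine (hpi.image fun f k => if h : k < j then f ⟨k, h⟩ else ∅).subset ?_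
  rintro S ⟨hS_empty, hS_sub, -⟩
  refine ⟨fun k => S k, fun k _ => mem_powerset.2 (hS_sub k k.isLt), funext fun k => ?_⟩
  dsimp only
  by_cases hk : k < j
  · rw [dif_pos hk]
  · rw [dif_neg hk, hS_empty k (not_lt.1 hk)]

lemma Tpm_disjoint (hj : 0 < j) : Disjoint (Tpm n j false) (Tpm n j true) :=
  Set.disjoint_left.2 fun _ hS hS' => by
    simpa using (hS.2.2.2.2.2 hj).1 ((hS'.2.2.2.2.2 hj).2 rfl)

lemma ncard_Tpm_succ (hi : 0 < i) :
    (Tpm n (i + 1) pos).ncard =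
      (Tpm n i false).ncard * #(nextBlocks (n i) false pos) +
        (Tpm n i true).ncard * #(nextBlocks (n i) true pos) := by
  have hdom : Tpm n i false ×ˢ (nextBlocks (n i) false pos : Set (Finset ℕ)) ∪
      Tpm n i true ×ˢ (nextBlocks (n i) true pos : Set (Finset ℕ)) ⊆ {p | p.1 i = ∅} := by
    rintro ⟨T, A⟩ (⟨hT, -⟩ | ⟨hT, -⟩) <;> exact hT.1 i le_rfl
  rw [Tpm_succ_eq_image hi, (update_injOn.mono hdom).ncard_image,
    Set.ncard_union_eq (Set.disjoint_prod.2 (Or.inl (Tpm_disjoint hi)))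
      (Tpm_finite.prod (finite_toSet _)) (Tpm_finite.prod (finite_toSet _)),
    Set.ncard_prod, Set.ncard_prod, Set.ncard_coe_finset, Set.ncard_coe_finset]

lemma Tpm_one_eq_image :
    Tpm n 1 pos =
      (fun a => update (fun _ => ∅) 0 {a}) '' {a | a < n 0 ∧ (a = n 0 - 1 ↔ pos)} := by
  ext S
  constructor
  · rintro ⟨hS_empty, hS_sub, -, hS_card, -, hS_last⟩
    obtain ⟨a, ha⟩ := card_eq_one.1 (hS_card one_pos)
    refine ⟨a, ⟨by simpa [ha] using hS_sub 0 one_pos,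
      by simpa [ha, eq_comm] using hS_last one_pos⟩, funext fun k => ?_⟩
    rcases eq_or_ne k 0 with rfl | hk
    · simp [ha]
    · simp [hk, hS_empty k (by omega)]
  · rintro ⟨a, ⟨ha, ha_last⟩, rfl⟩
    have hk0 : ∀ k < 1, k = 0 := fun k hk => Nat.lt_one_iff.1 hk
    refine ⟨fun k hk => update_of_ne (by omega) .., fun k hk => ?_, fun k hk => ?_,
      fun _ => by simp, fun k hk => absurd hk (by omega), fun _ => ?_⟩
    · simpa [hk0 k hk] using ha
    · simp [hk0 k hk]
    · simpa [eq_comm] using ha_last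

lemma ncard_Tpm_one : (Tpm n 1 pos).ncard = {a | a < n 0 ∧ (a = n 0 - 1 ↔ pos)}.ncard := by
  rw [Tpm_one_eq_image]
  exact Set.ncard_image_of_injective _
    ((update_injective (fun _ => (∅ : Finset ℕ)) 0).comp singleton_injective)

lemma ncard_Tpm_one_false : (Tpm n 1 false).ncard = n 0 - 1 := by
  have h : {a | a < n 0 ∧ (a = n 0 - 1 ↔ false)} = Set.Iio (n 0 - 1) := by
    ext a; simp only [Set.mem_Iio]; grind
  rw [ncard_Tpm_one, h, Set.ncard_Iio_nat]

lemma ncard_Tpm_one_true (h0 : 0 < n 0) : (Tpm n 1 true).ncard = 1 := by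
  have h : {a | a < n 0 ∧ (a = n 0 - 1 ↔ true)} = {n 0 - 1} := by
    ext a; simp only [Set.mem_singleton_iff]; grind
  rw [ncard_Tpm_one, h, Set.ncard_singleton]

end

/-- The crossing recurrence: `#T^-_1 = n_1 − 1`, `#T^+_1 = 1`, and for `2 ≤ j ≤ α`,
`#T^-_j = (2^{n_j−1} − 1)·#T^-_{j−1} + 2^{n_j−2}·#T^+_{j−1}` and
`#T^+_j = 2^{n_j−1}·#T^-_{j−1} + 2^{n_j−2}·#T^+_{j−1}`.
(`n_j` of the paper is `n (j-1)` here.) -/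
theorem Tpm_crossing_recurrence (α : ℕ) (hα : 1 ≤ α) (n : ℕ → ℕ)
    (hn : ∀ i, i < α → 2 ≤ n i) :
    (Tpm n 1 false).ncard = n 0 - 1 ∧
    (Tpm n 1 true).ncard = 1 ∧
    (∀ j, 2 ≤ j → j ≤ α →
      (Tpm n j false).ncard =
        (2 ^ (n (j - 1) - 1) - 1) * (Tpm n (j - 1) false).ncard +
          2 ^ (n (j - 1) - 2) * (Tpm n (j - 1) true).ncard ∧
      (Tpm n j true).ncard =
        2 ^ (n (j - 1) - 1) * (Tpm n (j - 1) false).ncard +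
          2 ^ (n (j - 1) - 2) * (Tpm n (j - 1) true).ncard) := by
  have hn0 : 0 < n 0 := Nat.zero_lt_two.trans_le (hn 0 hα)
  refine ⟨ncard_Tpm_one_false, ncard_Tpm_one_true hn0, fun j hj hjα => ?_⟩
  obtain ⟨i, rfl⟩ : ∃ i, j = i + 1 := ⟨j - 1, by omega⟩
  have hm : 2 ≤ n i := hn i (by omega)
  rw [Nat.add_sub_cancel, ncard_Tpm_succ (by omega), ncard_Tpm_succ (by omega),
    card_nextBlocks_false_false, card_nextBlocks_true_false hm,
    card_nextBlocks_false_true (by omega), card_nextBlocks_true_true hm]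
  constructor <;> ring
end

section
/- For α = 3 and integers n_1, n_2, n_3 ≥ 2, the number of valid sequences is #T_3 = (n_1 − 1) + 3·2^{n_2+n_3−3}·(2·n_1 − 1) − 2^{n_3}·(n_1 − 1). -/
/-!
A valid sequence is determined by the triple `(a, S₂, S₃)` with `S₁ = {a}`. Triples obeying only
the carry rule (P3) are counted fibrewise: given `S₂`, there are `2^(n₃-1)` or `2^n₃` choices of
`S₃` according as `n₂ - 1 ∈ S₂` or not, and summing over `S₂` (which must contain `0` when
`a = n₁ - 1`) gives `3·2^(n₂+n₃-3)·(2n₁ - 1)`. Rule (P2) then removes exactly the triples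
`(a, ∅, S₃)` with `a ≠ n₁ - 1` and `S₃ ≠ ∅`, of which there are `(n₁ - 1)(2^n₃ - 1)`.
-/

/-- The set `T_α` of valid sequences `(S_1,…,S_α)` (indexed here from `0`, with
`S k = ∅` for `k ≥ α`): each `S_k ⊆ {0,…,n_k−1}`, `S_0` is a singleton (P1),
`S_k = ∅` implies `S_{k+1} = ∅` (P2), and `n_k − 1 ∈ S_k` implies `0 ∈ S_{k+1}` (P3). -/
def Tset (n : ℕ → ℕ) (α : ℕ) : Set (ℕ → Finset ℕ) :=
  {S | (∀ k, α ≤ k → S k = ∅) ∧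
       (∀ k, k < α → S k ⊆ Finset.range (n k)) ∧
       (0 < α → (S 0).card = 1) ∧
       (∀ k, k + 1 < α → S k = ∅ → S (k + 1) = ∅) ∧
       (∀ k, k + 1 < α → n k - 1 ∈ S k → 0 ∈ S (k + 1))}

open Finset

namespace Finset

variable {α M : Type*} [DecidableEq α] [AddCommMonoid M]

theorem sum_powerset_ite_mem {w : Finset α} {y : α} (hy : y ∈ w) (X Y : M) :
    ∑ s ∈ w.powerset, (if y ∈ s then X else Y) = 2 ^ (#w - 1) • (X + Y) := by
  have hy' : y ∉ w.erase y := notMem_erase y w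
  conv_lhs => rw [← insert_erase hy, sum_powerset_insert hy']
  rw [sum_congr rfl fun s hs => if_neg fun h => hy' (mem_powerset.1 hs h),
    sum_congr rfl fun s _ => if_pos (mem_insert_self y s), sum_const, sum_const, card_powerset,
    card_erase_of_mem hy, ← smul_add, add_comm]

theorem sum_powerset_filter_mem {w : Finset α} {x : α} (hx : x ∈ w) (f : Finset α → M) :
    ∑ s ∈ w.powerset with x ∈ s, f s = ∑ s ∈ (w.erase x).powerset, f (insert x s) := by
  have hx' : x ∉ w.erase x := notMem_erase x w
  rw [sum_filter]
  conv_lhs => rw [← insert_erase hx, sum_powerset_insert hx']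
  rw [sum_eq_zero fun s hs => if_neg fun h => hx' (mem_powerset.1 hs h), zero_add]
  exact sum_congr rfl fun s _ => if_pos (mem_insert_self x s)

theorem card_powerset_filter_imp_mem {w : Finset α} {x : α} (hx : x ∈ w) (p : Prop)
    [Decidable p] : #{t ∈ w.powerset | p → x ∈ t} = if p then 2 ^ (#w - 1) else 2 ^ #w := by
  by_cases hp : p
  · rw [if_pos hp, card_filter]
    simpa only [hp, true_imp_iff, smul_eq_mul, add_zero, mul_one]
      using sum_powerset_ite_mem hx (1 : ℕ) 0
  · rw [if_neg hp, filter_true_of_mem fun t _ h => absurd h hp, card_powerset]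

end Finset

def seq3 (s₀ s₁ s₂ : Finset ℕ) : ℕ → Finset ℕ
  | 0 => s₀
  | 1 => s₁
  | 2 => s₂
  | _ => ∅

theorem seq3_singleton_injective :
    Function.Injective fun p : ℕ × Finset ℕ × Finset ℕ => seq3 {p.1} p.2.1 p.2.2 := by
  rintro ⟨a, s, u⟩ ⟨b, t, v⟩ h
  have h0 := congrFun h 0
  have h1 := congrFun h 1
  have h2 := congrFun h 2
  simp_all [seq3]

theorem seq3_eq_self {S : ℕ → Finset ℕ} (h : ∀ k, 3 ≤ k → S k = ∅) :
    seq3 (S 0) (S 1) (S 2) = S := by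
  funext k
  match k with
  | 0 | 1 | 2 => rfl
  | k + 3 => exact (h (k + 3) (by omega)).symm

/-- The triples `(a, S₂, S₃)` with `S₁ = {a}` satisfying (P3); `validTriples` adds (P2). -/
def carryTriples (n : ℕ → ℕ) : Finset (ℕ × Finset ℕ × Finset ℕ) :=
  {p ∈ range (n 0) ×ˢ (range (n 1)).powerset ×ˢ (range (n 2)).powerset |
    (p.1 = n 0 - 1 → 0 ∈ p.2.1) ∧ (n 1 - 1 ∈ p.2.1 → 0 ∈ p.2.2)}

def validTriples (n : ℕ → ℕ) : Finset (ℕ × Finset ℕ × Finset ℕ) :=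
  {p ∈ carryTriples n | p.2.1 = ∅ → p.2.2 = ∅}

theorem Tset_three_eq_image (n : ℕ → ℕ) :
    Tset n 3 = (fun p : ℕ × Finset ℕ × Finset ℕ => seq3 {p.1} p.2.1 p.2.2) '' validTriples n := by
  ext S
  constructor
  · rintro ⟨hzero, hsub, hcard, hP2, hP3⟩
    obtain ⟨a, ha⟩ := card_eq_one.1 (hcard three_pos)
    refine ⟨(a, S 1, S 2), ?_, by simpa [ha] using seq3_eq_self hzero⟩
    simp only [validTriples, carryTriples, mem_coe, mem_filter, mem_product, mem_range,
      mem_powerset]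
    refine ⟨⟨⟨?_, hsub 1 (by norm_num), hsub 2 (by norm_num)⟩,
      fun h => hP3 0 (by norm_num) (by simp [ha, h]), hP3 1 (by norm_num)⟩, hP2 1 (by norm_num)⟩
    exact mem_range.1 (hsub 0 (by norm_num) (by simp [ha]))
  · rintro ⟨⟨a, s, u⟩, hp, rfl⟩
    simp only [validTriples, carryTriples, mem_coe, mem_filter, mem_product, mem_range,
      mem_powerset] at hp
    obtain ⟨⟨⟨ha, hs, hu⟩, hP3₀, hP3₁⟩, hP2⟩ := hp
    refine ⟨fun k hk => ?_, fun k hk => ?_, fun _ => card_singleton a, fun k hk => ?_,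
      fun k hk => ?_⟩
    · match k, hk with | k + 3, _ => rfl
    · interval_cases k <;> simpa [seq3]
    · obtain rfl | rfl : k = 0 ∨ k = 1 := by omega
      · simp [seq3]
      · exact hP2
    · obtain rfl | rfl : k = 0 ∨ k = 1 := by omega
      · simpa [seq3, eq_comm] using hP3₀
      · exact hP3₁

theorem card_powerset_product_filter_carry (m k : ℕ) (hm : 2 ≤ m) (hk : 1 ≤ k) (p : Prop)
    [Decidable p] :
    #{q ∈ (range m).powerset ×ˢ (range k).powerset | (p → 0 ∈ q.1) ∧ (m - 1 ∈ q.1 → 0 ∈ q.2)} =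
      (if p then 2 ^ (m - 2) else 2 ^ (m - 1)) * (2 ^ (k - 1) + 2 ^ k) := by
  have hlast : m - 1 ∈ range m := mem_range.2 (by omega)
  have fibre (s : Finset ℕ) :
      ∑ u ∈ (range k).powerset, (if (p → 0 ∈ s) ∧ (m - 1 ∈ s → 0 ∈ u) then 1 else 0) =
        if p → 0 ∈ s then (if m - 1 ∈ s then 2 ^ (k - 1) else 2 ^ k) else 0 := by
    by_cases hs : p → 0 ∈ s
    · simp only [and_iff_right hs, if_pos hs, ← card_filter]
      simpa using card_powerset_filter_imp_mem (mem_range.2 hk) (m - 1 ∈ s)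
    · rw [if_neg hs]
      exact sum_eq_zero fun u _ => if_neg fun h => hs h.1
  rw [card_filter, sum_product, sum_congr rfl fun s _ => fibre s, ← sum_filter]
  by_cases hp : p
  · have hlast_erase : m - 1 ∈ (range m).erase 0 := mem_erase.2 ⟨by omega, hlast⟩
    simp only [hp, true_imp_iff, if_true]
    rw [sum_powerset_filter_mem (mem_range.2 (by omega : 0 < m))]
    simp only [mem_insert, show m - 1 ≠ 0 by omega, false_or]
    rw [sum_powerset_ite_mem hlast_erase, card_erase_of_mem (mem_range.2 (by omega)), card_range,
      smul_eq_mul, Nat.sub_sub]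
  · simp only [hp, false_imp_iff, filter_true, if_false]
    rw [sum_powerset_ite_mem hlast, card_range, smul_eq_mul]

theorem card_carryTriples (n : ℕ → ℕ) (h0 : 1 ≤ n 0) (h1 : 2 ≤ n 1) (h2 : 1 ≤ n 2) :
    #(carryTriples n) =
      (2 ^ (n 1 - 2) + (n 0 - 1) * 2 ^ (n 1 - 1)) * (2 ^ (n 2 - 1) + 2 ^ n 2) := by
  rw [carryTriples, card_filter, sum_product]
  simp only [← card_filter, card_powerset_product_filter_carry (n 1) (n 2) h1 h2]
  obtain ⟨A, hA⟩ : ∃ A, n 0 = A + 1 := ⟨n 0 - 1, by omega⟩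
  rw [hA, Nat.add_sub_cancel, sum_range_succ, if_pos rfl,
    sum_congr rfl fun a ha => by rw [if_neg (mem_range.1 ha).ne], sum_const, card_range,
    smul_eq_mul]
  ring

theorem card_validTriples_add_eq_card_carryTriples (n : ℕ → ℕ) :
    #(validTriples n) + (n 0 - 1) * (2 ^ n 2 - 1) = #(carryTriples n) := by
  have hbad : {p ∈ carryTriples n | ¬(p.2.1 = ∅ → p.2.2 = ∅)} =
      (range (n 0)).erase (n 0 - 1) ×ˢ {∅} ×ˢ (range (n 2)).powerset.erase ∅ := by
    ext ⟨a, s, u⟩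
    simp only [carryTriples, mem_filter, mem_product, mem_range, mem_powerset, mem_erase,
      mem_singleton, Classical.not_imp]
    constructor
    · rintro ⟨⟨⟨ha, -, hu⟩, hP3, -⟩, rfl, hne⟩
      exact ⟨⟨fun h => notMem_empty 0 (hP3 h), ha⟩, rfl, hne, hu⟩
    · rintro ⟨⟨hne, ha⟩, rfl, hu', hu⟩
      exact ⟨⟨⟨ha, empty_subset _, hu⟩, fun h => absurd h hne, fun h => absurd h (notMem_empty _)⟩,
        rfl, hu'⟩
  rw [validTriples, ← card_filter_add_card_filter_not (s := carryTriples n)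
    (fun p => p.2.1 = ∅ → p.2.2 = ∅), hbad, card_product, card_product, card_singleton,
    card_erase_of_mem (empty_mem_powerset _), card_powerset, card_range, one_mul]
  by_cases h0 : n 0 = 0
  · simp [h0]
  · rw [card_erase_of_mem (mem_range.2 (by omega)), card_range]

/-- For `α = 3` and `n_1, n_2, n_3 ≥ 2`, the number of valid sequences is
`#T_3 = (n_1 − 1) + 3·2^{n_2+n_3−3}·(2·n_1 − 1) − 2^{n_3}·(n_1 − 1)`
(here `n_1 = n 0`, `n_2 = n 1`, `n_3 = n 2`). -/
theorem Tset_three_card (n : ℕ → ℕ) (hn1 : 2 ≤ n 0) (hn2 : 2 ≤ n 1) (hn3 : 2 ≤ n 2) :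
    ((Tset n 3).ncard : ℤ) =
      ((n 0 : ℤ) - 1) + 3 * 2 ^ (n 1 + n 2 - 3) * (2 * (n 0 : ℤ) - 1) -
        2 ^ (n 2) * ((n 0 : ℤ) - 1) := by
  have hcard : (Tset n 3).ncard = #(validTriples n) := by
    rw [Tset_three_eq_image, Set.ncard_image_of_injective _ seq3_singleton_injective,
      Set.ncard_coe_finset]
  have hsplit := card_validTriples_add_eq_card_carryTriples n
  rw [card_carryTriples n (by omega) hn2 (by omega)] at hsplit
  obtain ⟨a, ha⟩ : ∃ a, n 0 = a + 1 := ⟨n 0 - 1, by omega⟩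
  obtain ⟨b, hb⟩ : ∃ b, n 1 = b + 2 := ⟨n 1 - 2, by omega⟩
  obtain ⟨c, hc⟩ : ∃ c, n 2 = c + 2 := ⟨n 2 - 2, by omega⟩
  rw [ha, hb, hc] at hsplit ⊢
  rw [show b + 2 + (c + 2) - 3 = b + c + 1 by omega]
  simp only [Nat.add_sub_cancel, show b + 2 - 1 = b + 1 by omega,
    show c + 2 - 1 = c + 1 by omega] at hsplit
  rw [hcard]
  zify [Nat.one_le_two_pow] at hsplit
  push_cast
  linear_combination hsplit
end

section
/- With the convention m_0 = 0, the polynomials m_i = Σ_{c ⊨ i} (−1)^{|c|+i}·(3/2)^{Θ(c)}·[c] satisfy m_1 = x_1 and, for all i ≥ 2, m_i = ((3/2)·x_i − 1)·m_{i−1} + (1/2)·x_i·m_{i−2}. -/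
open MvPolynomial

/-- The monomial `[c] = x_1·x_{1+c_1}·x_{1+c_1+c_2}···x_{1+c_1+⋯+c_{ℓ−1}}` attached to a
composition with list of parts `l` (with the convention `[()] = 0` for the empty list). -/
noncomputable def brk (l : List ℕ) : MvPolynomial ℕ ℚ :=
  if l.length = 0 then 0
  else ∏ k ∈ Finset.range l.length, X (1 + (l.take k).sum)

/-- `Θ(c) = #{ j : 1 ≤ j ≤ ℓ−1, c_j = 1 }`, the number of parts equal to `1` among the
first `ℓ−1` parts of the composition with parts `l`. -/
def theta (l : List ℕ) : ℕ :=
  ((l.take (l.length - 1)).filter (· == 1)).length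

/-- `m_i = Σ_{c ⊨ i} (−1)^{|c|+i}·(3/2)^{Θ(c)}·[c]` (thanks to the convention `[()] = 0`
this gives `m_0 = 0`). -/
noncomputable def mPoly (i : ℕ) : MvPolynomial ℕ ℚ :=
  ∑ c : Composition i,
    C ((-1 : ℚ) ^ (c.length + i) * (3 / 2 : ℚ) ^ theta c.blocks) * brk c.blocks

/-!
Split the compositions of `n + 1` according to their last part. Neither `[c]` nor `Θ(c)` sees
the value of the last part, so raising it from `a` to `a + 1` only flips the sign of the summand:
the compositions whose last part is at least `2` contribute `-m_n`, hence
`m_{n+1} + m_n = A_n`, the sum over the compositions `d ++ [1]` with `d ⊨ n`. Appending a `1`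
to `d ⊨ n + 1` multiplies `[d]` by `x_{n+2}` and raises `Θ` by one exactly when `d` ends in `1`,
so `A_{n+1} = x_{n+2} (m_{n+1} + A_n / 2)`; eliminating `A` gives the recurrence.
-/

noncomputable def weight (l : List ℕ) : MvPolynomial ℕ ℚ :=
  C ((-1 : ℚ) ^ (l.length + l.sum) * (3 / 2 : ℚ) ^ theta l) * brk l

lemma mPoly_eq_sum_weight (n : ℕ) : mPoly n = ∑ c : Composition n, weight c.blocks := by
  refine Finset.sum_congr rfl fun c _ => ?_
  rw [weight, c.blocks_sum, c.blocks_length]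

lemma brk_append_singleton_congr (l : List ℕ) (a b : ℕ) : brk (l ++ [a]) = brk (l ++ [b]) := by
  simp only [brk, List.length_append, List.length_singleton]
  refine if_congr Iff.rfl rfl (Finset.prod_congr rfl fun k hk => ?_)
  have hk : k ≤ l.length := Nat.lt_succ_iff.1 (Finset.mem_range.1 hk)
  rw [List.take_append_of_le_length hk, List.take_append_of_le_length hk]

lemma brk_append_singleton {l : List ℕ} (hl : l ≠ []) (a : ℕ) :
    brk (l ++ [a]) = brk l * X (1 + l.sum) := by
  have hlen : l.length ≠ 0 := by simpa using hl
  simp only [brk, List.length_append, List.length_singleton, Nat.add_eq_zero_iff, hlen,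
    false_and, if_false, Finset.prod_range_succ, List.take_left]
  congr 1
  refine Finset.prod_congr rfl fun k hk => ?_
  rw [List.take_append_of_le_length (Finset.mem_range.1 hk).le]

lemma theta_append_singleton (l : List ℕ) (a : ℕ) : theta (l ++ [a]) = l.count 1 := by
  simp [theta, List.count_eq_countP, List.countP_eq_length_filter]

lemma weight_nil : weight [] = 0 := by
  simp [weight, brk]

lemma weight_append_succ (l : List ℕ) (a : ℕ) : weight (l ++ [a + 1]) = -weight (l ++ [a]) := by
  simp only [weight, theta_append_singleton, brk_append_singleton_congr l (a + 1) a,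
    List.length_append, List.length_cons, List.length_nil, List.sum_append, List.sum_singleton,
    map_mul, map_pow, map_neg, map_one]
  ring

lemma weight_append_one {l : List ℕ} (hl : l ≠ []) :
    weight (l ++ [1]) =
      X (1 + l.sum) * (weight l + if l.getLast? = some 1 then C (1 / 2) * weight l else 0) := by
  obtain ⟨t, a, rfl⟩ := (List.eq_nil_or_concat' l).resolve_left hl
  have hsign : (-1 : ℚ) ^ ((t ++ [a] ++ [1]).length + (t ++ [a] ++ [1]).sum) =
      (-1) ^ ((t ++ [a]).length + (t ++ [a]).sum) := by
    simp only [List.length_append, List.sum_append, List.length_singleton, List.sum_singleton]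
    rw [show ∀ m k : ℕ, m + 1 + (k + 1) = m + k + 2 by omega, pow_add]
    norm_num
  rw [weight, weight, hsign, brk_append_singleton hl, theta_append_singleton,
    theta_append_singleton, List.count_append, List.getLast?_concat]
  by_cases ha : a = 1
  · subst ha
    rw [if_pos rfl, List.count_singleton_self, pow_succ,
      show (3 / 2 : ℚ) = 1 + 1 / 2 by norm_num]
    simp only [map_mul, map_add, map_pow, map_one]
    ring
  · rw [if_neg (by simpa using ha), List.count_singleton, if_neg (by simpa using ha),
      add_zero, add_zero]
    ring

lemma sum_composition_zero {M : Type*} [AddCommMonoid M] (f : List ℕ → M) :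
    ∑ c : Composition 0, f c.blocks = f [] := by
  rw [Fintype.sum_eq_single (Composition.ones 0) fun c hc => absurd (Composition.ext ?_) hc]
  · rfl
  · simp [Composition.blocks_eq_nil]

namespace Composition

variable {n : ℕ}

lemma exists_blocks_eq_append_singleton (c : Composition (n + 1)) :
    ∃ ys a, c.blocks = ys ++ [a] :=
  (List.eq_nil_or_concat' c.blocks).resolve_left (by simp [blocks_eq_nil])

def incLast (c : Composition (n + 1)) : Composition (n + 2) where
  blocks := c.blocks.modifyLast (· + 1)
  blocks_pos {i} hi := by
    obtain ⟨ys, a, hc⟩ := c.exists_blocks_eq_append_singleton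
    rw [hc, List.modifyLast_concat, List.mem_append, List.mem_singleton] at hi
    rcases hi with hi | rfl
    · exact c.blocks_pos (hc ▸ List.mem_append_left _ hi)
    · exact a.succ_pos
  blocks_sum := by
    obtain ⟨ys, a, hc⟩ := c.exists_blocks_eq_append_singleton
    have hsum := c.blocks_sum
    rw [hc, List.sum_append, List.sum_singleton] at hsum
    rw [hc, List.modifyLast_concat, List.sum_append, List.sum_singleton, ← add_assoc, hsum]

lemma sum_filter_getLast?_eq_one {M : Type*} [AddCommMonoid M] (f : List ℕ → M) :
    ∑ c : Composition (n + 1) with c.blocks.getLast? = some 1, f c.blocks =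
      ∑ d : Composition n, f (d.blocks ++ [1]) := by
  refine (Finset.sum_bij (fun d _ => d.append (single 1 one_pos)) (fun d _ => by simp)
    (fun d₁ _ d₂ _ h => Composition.ext (List.append_cancel_right (congrArg blocks h)))
    (fun c hc => ?_) (fun _ _ => rfl)).symm
  obtain ⟨ys, hc⟩ := List.getLast?_eq_some_iff.1 (Finset.mem_filter.1 hc).2
  have hsum : ys.sum = n := by simpa [hc] using c.blocks_sum
  exact ⟨⟨ys, fun hi => c.blocks_pos (hc ▸ List.mem_append_left _ hi), hsum⟩,
    Finset.mem_univ _, Composition.ext hc.symm⟩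

lemma sum_filter_getLast?_ne_one {M : Type*} [AddCommMonoid M] (f : List ℕ → M) :
    ∑ c : Composition (n + 2) with c.blocks.getLast? ≠ some 1, f c.blocks =
      ∑ d : Composition (n + 1), f d.incLast.blocks := by
  refine (Finset.sum_bij (fun d _ => d.incLast) (fun d _ => ?_) (fun d₁ _ d₂ _ h => ?_)
    (fun c hc => ?_) (fun _ _ => rfl)).symm
  · obtain ⟨ys, a, hd⟩ := d.exists_blocks_eq_append_singleton
    have ha : 0 < a := d.blocks_pos (by simp [hd])
    simp only [ne_eq, Finset.mem_filter, Finset.mem_univ, true_and, incLast, hd,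
      List.modifyLast_concat, List.getLast?_append, List.getLast?_singleton, Option.some_or,
      Option.some.injEq]
    omega
  · obtain ⟨ys₁, a₁, hd₁⟩ := d₁.exists_blocks_eq_append_singleton
    obtain ⟨ys₂, a₂, hd₂⟩ := d₂.exists_blocks_eq_append_singleton
    have h' := congrArg blocks h
    simp only [incLast, hd₁, hd₂, List.modifyLast_concat, List.append_singleton_inj,
      Nat.add_right_cancel_iff] at h'
    exact Composition.ext (by rw [hd₁, hd₂, h'.1, h'.2])
  · obtain ⟨ys, a, hc'⟩ := c.exists_blocks_eq_append_singleton
    have ha : 0 < a := c.blocks_pos (by simp [hc'])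
    have ha' : a ≠ 1 := by simpa [hc'] using (Finset.mem_filter.1 hc).2
    have hsum : ys.sum + a = n + 2 := by simpa [hc'] using c.blocks_sum
    refine ⟨⟨ys ++ [a - 1], fun {i} hi => ?_, ?_⟩, Finset.mem_univ _, Composition.ext ?_⟩
    · rcases List.mem_append.1 hi with hi | hi
      · exact c.blocks_pos (by simp [hc', hi])
      · rw [List.mem_singleton] at hi; omega
    · rw [List.sum_append, List.sum_singleton]; omega
    · simp only [incLast, List.modifyLast_concat, hc', List.append_cancel_left_eq,
        List.cons.injEq, and_true]
      omega

lemma weight_incLast (c : Composition (n + 1)) : weight c.incLast.blocks = -weight c.blocks := by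
  obtain ⟨ys, a, hc⟩ := c.exists_blocks_eq_append_singleton
  change weight (c.blocks.modifyLast (· + 1)) = _
  rw [hc, List.modifyLast_concat, weight_append_succ]

end Composition

lemma sum_weight_getLast?_ne_one (n : ℕ) :
    ∑ c : Composition (n + 1) with c.blocks.getLast? ≠ some 1, weight c.blocks = -mPoly n := by
  cases n with
  | zero =>
    rw [mPoly_eq_sum_weight, sum_composition_zero, weight_nil, neg_zero]
    refine Finset.sum_eq_zero fun c hc => absurd ?_ (Finset.mem_filter.1 hc).2
    obtain ⟨ys, a, hc'⟩ := c.exists_blocks_eq_append_singleton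
    have ha : a ∈ c.blocks := by simp [hc']
    simp [hc', le_antisymm (c.blocks_le ha) (c.one_le_blocks ha)]
  | succ n =>
    rw [Composition.sum_filter_getLast?_ne_one, mPoly_eq_sum_weight, ← Finset.sum_neg_distrib]
    exact Finset.sum_congr rfl fun c _ => c.weight_incLast

lemma mPoly_succ_add_mPoly (n : ℕ) :
    mPoly (n + 1) + mPoly n = ∑ d : Composition n, weight (d.blocks ++ [1]) := by
  rw [mPoly_eq_sum_weight (n + 1), ← Finset.sum_filter_add_sum_filter_not Finset.univ
    (fun c : Composition (n + 1) => c.blocks.getLast? = some 1),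
    Composition.sum_filter_getLast?_eq_one, sum_weight_getLast?_ne_one, neg_add_cancel_right]

lemma sum_weight_append_one (n : ℕ) :
    ∑ d : Composition (n + 1), weight (d.blocks ++ [1]) =
      X (n + 2) * (mPoly (n + 1) + C (1 / 2) * ∑ e : Composition n, weight (e.blocks ++ [1])) :=
  calc ∑ d : Composition (n + 1), weight (d.blocks ++ [1])
      = ∑ d : Composition (n + 1), X (n + 2) * (weight d.blocks +
          if d.blocks.getLast? = some 1 then C (1 / 2) * weight d.blocks else 0) := by
        refine Finset.sum_congr rfl fun d _ => ?_
        rw [weight_append_one (by simp [Composition.blocks_eq_nil]), d.blocks_sum, add_comm 1]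
    _ = X (n + 2) * (mPoly (n + 1) + C (1 / 2) *
          ∑ d : Composition (n + 1) with d.blocks.getLast? = some 1, weight d.blocks) := by
        rw [← Finset.mul_sum, Finset.sum_add_distrib, ← Finset.sum_filter, Finset.mul_sum,
          mPoly_eq_sum_weight]
    _ = _ := by rw [Composition.sum_filter_getLast?_eq_one]

/-- With the convention `m_0 = 0`, the polynomials
`m_i = Σ_{c ⊨ i} (−1)^{|c|+i}·(3/2)^{Θ(c)}·[c]` satisfy `m_1 = x_1` and, for all `i ≥ 2`,
`m_i = ((3/2)·x_i − 1)·m_{i−1} + (1/2)·x_i·m_{i−2}`. -/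
theorem mPoly_recurrence :
    mPoly 0 = 0 ∧
    mPoly 1 = X 1 ∧
    ∀ i, 2 ≤ i →
      mPoly i = (C (3 / 2 : ℚ) * X i - 1) * mPoly (i - 1) +
        C (1 / 2 : ℚ) * X i * mPoly (i - 2) := by
  have hzero : mPoly 0 = 0 := by rw [mPoly_eq_sum_weight, sum_composition_zero, weight_nil]
  refine ⟨hzero, ?_, fun i hi => ?_⟩
  · have h := mPoly_succ_add_mPoly 0
    rw [hzero, add_zero, sum_composition_zero fun l => weight (l ++ [1])] at h
    simp [h, weight, theta, brk]
  · obtain ⟨n, rfl⟩ := Nat.exists_eq_add_of_le' hi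
    have hC : (C (3 / 2) : MvPolynomial ℕ ℚ) = 1 + C (1 / 2) := by
      rw [← C_1, ← C_add]; norm_num
    have h := mPoly_succ_add_mPoly (n + 1)
    rw [sum_weight_append_one, ← mPoly_succ_add_mPoly n] at h
    rw [show n + 2 - 1 = n + 1 from rfl, Nat.add_sub_cancel]
    linear_combination h - X (n + 2) * mPoly (n + 1) * hC
end

section
/- For every α ≥ 1 and integers n_1,…,n_α ≥ 2, the number #T_α of valid sequences equals the value of the polynomial s_{α−1} := s^+_{α−1} + Σ_{j=0}^{α−1} s^-_j under the substitution x_j ↦ 2^{n_{j+1}−1} for 1 ≤ j ≤ α−1, y ↦ 1/2, z ↦ n_1 − 1. -/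
open MvPolynomial

/-- We work in `ℚ[x_1,x_2,…][y,z]`: polynomials in the two variables `y` (encoded `false`)
and `z` (encoded `true`) over the ring `ℚ[x_1,x_2,…]`.  `sPair j = (s^-_j, s^+_j)` where
`s^-_0 = z`, `s^+_0 = 2y`, and for `j ≥ 1`,
`s^-_j = (x_j − 1)·s^-_{j−1} + (1/2)·x_j·s^+_{j−1}`,
`s^+_j = x_j·s^-_{j−1} + (1/2)·x_j·s^+_{j−1}`. -/
noncomputable def sPair : ℕ →
    MvPolynomial Bool (MvPolynomial ℕ ℚ) × MvPolynomial Bool (MvPolynomial ℕ ℚ)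
  | 0 => (X true, 2 * X false)
  | j + 1 =>
    ((C (X (j + 1) : MvPolynomial ℕ ℚ) - 1) * (sPair j).1 +
        C ((MvPolynomial.C (1 / 2 : ℚ) * X (j + 1) : MvPolynomial ℕ ℚ)) * (sPair j).2,
      C (X (j + 1) : MvPolynomial ℕ ℚ) * (sPair j).1 +
        C ((MvPolynomial.C (1 / 2 : ℚ) * X (j + 1) : MvPolynomial ℕ ℚ)) * (sPair j).2)

/-- `s^-_j`. -/
noncomputable def smP (j : ℕ) : MvPolynomial Bool (MvPolynomial ℕ ℚ) := (sPair j).1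

/-- `s^+_j`. -/
noncomputable def spP (j : ℕ) : MvPolynomial Bool (MvPolynomial ℕ ℚ) := (sPair j).2

/-!
A valid sequence grows one set at a time, and which sets `S_{β+1} ⊆ {0,…,n_{β+1}−1}` may
follow `S_β` depends only on the *kind* of `S_β`: empty (then only `∅` may follow), nonempty
without its top element `n_β − 1` (then any set may follow), or containing it (then exactly
the sets containing `0` may follow). Counting the valid sequences of length `β + 1` by the kind
of their last set gives numbers `e_β, m_β, p_β` with `e_0 = 0`, `m_0 = n_1 − 1`, `p_0 = 1` and,
for `x = 2^{n_{β+2}−1}`,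
`e_{β+1} = e_β + m_β`, `m_{β+1} = (x − 1) m_β + (x/2) p_β`, `p_{β+1} = x m_β + (x/2) p_β`.
These are the recursions of `s^-_β` and `s^+_β`, so `m_β = s^-_β`, `p_β = s^+_β`,
`e_β = ∑_{j<β} s^-_j`, and `#T_{β+1} = e_β + m_β + p_β`.
-/

open Finset Function

theorem card_biUnion_image_update {ι β : Type*} [DecidableEq ι] [DecidableEq (ι → β)]
    {a : ι} {b : β} {A : Finset (ι → β)} (hA : ∀ f ∈ A, f a = b) (F : (ι → β) → Finset β) :
    #(A.biUnion fun f => (F f).image (update f a)) = ∑ f ∈ A, #(F f) := by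
  rw [card_biUnion]
  · exact sum_congr rfl fun f _ => card_image_of_injective _ (update_injective f a)
  · intro f hf g hg hfg
    refine disjoint_left.mpr fun h hf' hg' => hfg ?_
    obtain ⟨x, -, rfl⟩ := mem_image.mp hf'
    obtain ⟨y, -, hy⟩ := mem_image.mp hg'
    have restore : ∀ f ∈ A, ∀ x, update (update f a x) a b = f := fun f hf x => by
      rw [update_idem, ← hA f hf, update_eq_self]
    rw [← restore f hf x, ← restore g hg y, hy]

theorem update_singleton_injective :
    Injective fun i : ℕ => update (fun _ => (∅ : Finset ℕ)) 0 {i} :=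
  fun i j h => singleton_injective (by simpa using congrFun h 0)

namespace Tset

inductive Kind
  | empty
  | inner
  | top
  deriving DecidableEq

instance : Fintype Kind where
  elems := {.empty, .inner, .top}
  complete κ := by cases κ <;> simp

theorem Kind.sum_univ {M : Type*} [AddCommMonoid M] (f : Kind → M) :
    ∑ κ, f κ = f .empty + f .inner + f .top := by
  simp [Finset.univ, Fintype.elems, add_assoc]

def kind (m : ℕ) (X : Finset ℕ) : Kind :=
  if X = ∅ then .empty else if m - 1 ∈ X then .top else .inner

theorem kind_eq_empty_iff {m : ℕ} {T : Finset ℕ} : kind m T = .empty ↔ T = ∅ := by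
  unfold kind; split_ifs <;> simp_all

theorem kind_eq_top_iff {m : ℕ} {T : Finset ℕ} : kind m T = .top ↔ m - 1 ∈ T := by
  unfold kind; split_ifs <;> simp_all

def successors (m : ℕ) : Kind → Finset (Finset ℕ)
  | .empty => {∅}
  | .inner => (range m).powerset
  | .top => {T ∈ (range m).powerset | 0 ∈ T}

theorem mem_successors_kind {m m' : ℕ} {X T : Finset ℕ} :
    T ∈ successors m' (kind m X) ↔ T ⊆ range m' ∧ (X = ∅ → T = ∅) ∧ (m - 1 ∈ X → 0 ∈ T) := by
  unfold kind
  split_ifs <;> simp_all [successors]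

theorem update_mem_iff {n : ℕ → ℕ} {β : ℕ} {S : ℕ → Finset ℕ} (hS : S (β + 1) = ∅)
    (T : Finset ℕ) :
    update S (β + 1) T ∈ Tset n (β + 2) ↔
      S ∈ Tset n (β + 1) ∧ T ∈ successors (n (β + 1)) (kind (n β) (S β)) := by
  have hS' : ∀ k ≠ β + 1, update S (β + 1) T k = S k := fun k hk => update_of_ne hk _ _
  rw [mem_successors_kind]
  constructor
  · rintro ⟨h₁, h₂, h₃, h₄, h₅⟩
    refine ⟨⟨fun k hk => ?_, fun k hk => ?_, fun _ => ?_, fun k hk => ?_, fun k hk => ?_⟩,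
      ?_, ?_, ?_⟩
    · obtain rfl | hk' := eq_or_ne k (β + 1)
      · exact hS
      · simpa [hS' k hk'] using h₁ k (by omega)
    · simpa [hS' k (by omega)] using h₂ k (by omega)
    · simpa [hS' 0 (by omega)] using h₃ (by omega)
    · simpa [hS' k (by omega), hS' (k + 1) (by omega)] using h₄ k (by omega)
    · simpa [hS' k (by omega), hS' (k + 1) (by omega)] using h₅ k (by omega)
    · simpa using h₂ (β + 1) (by omega)
    · simpa [hS' β (by omega)] using h₄ β (by omega)
    · simpa [hS' β (by omega)] using h₅ β (by omega)
  · rintro ⟨⟨h₁, h₂, h₃, h₄, h₅⟩, hT, h₆, h₇⟩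
    refine ⟨fun k hk => ?_, fun k hk => ?_, fun _ => ?_, fun k hk => ?_, fun k hk => ?_⟩
    · simpa [hS' k (by omega)] using h₁ k (by omega)
    · obtain rfl | hk' := eq_or_ne k (β + 1)
      · simpa using hT
      · simpa [hS' k hk'] using h₂ k (by omega)
    · simpa [hS' 0 (by omega)] using h₃ (by omega)
    · obtain rfl | hk' := eq_or_ne k β
      · simpa [hS' k (by omega)] using h₆
      · simpa [hS' k (by omega), hS' (k + 1) (by omega)] using h₄ k (by omega)
    · obtain rfl | hk' := eq_or_ne k β
      · simpa [hS' k (by omega)] using h₇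
      · simpa [hS' k (by omega), hS' (k + 1) (by omega)] using h₅ k (by omega)

theorem mem_one_iff {n : ℕ → ℕ} {S : ℕ → Finset ℕ} :
    S ∈ Tset n 1 ↔ ∃ i < n 0, update (fun _ => ∅) 0 {i} = S := by
  constructor
  · rintro ⟨h₁, h₂, h₃, -, -⟩
    obtain ⟨i, hi⟩ := card_eq_one.mp (h₃ one_pos)
    refine ⟨i, by simpa [hi] using h₂ 0 one_pos, funext fun k => ?_⟩
    obtain rfl | hk := eq_or_ne k 0
    · simp [hi]
    · simp [hk, h₁ k (by omega)]
  · rintro ⟨i, hi, rfl⟩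
    refine ⟨fun k hk => ?_, fun k hk => ?_, fun _ => by simp, fun k hk => by omega,
      fun k hk => by omega⟩
    · simp [show k ≠ 0 by omega]
    · simp [show k = 0 by omega, hi]

open Classical in
noncomputable def validSeqs (n : ℕ → ℕ) : ℕ → Finset (ℕ → Finset ℕ)
  | 0 => (range (n 0)).image fun i => update (fun _ => ∅) 0 {i}
  | β + 1 => (validSeqs n β).biUnion fun S =>
      (successors (n (β + 1)) (kind (n β) (S β))).image (update S (β + 1))

theorem mem_validSeqs {n : ℕ → ℕ} {β : ℕ} {S : ℕ → Finset ℕ} :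
    S ∈ validSeqs n β ↔ S ∈ Tset n (β + 1) := by
  induction β generalizing S with
  | zero => simp [validSeqs, mem_one_iff]
  | succ β ih =>
    simp only [validSeqs, mem_biUnion, mem_image, ih]
    constructor
    · rintro ⟨S₀, hS₀, T, hT, rfl⟩
      exact (update_mem_iff (hS₀.1 _ le_rfl) T).mpr ⟨hS₀, hT⟩
    · intro hS
      have key := update_mem_iff (n := n) (S := update S (β + 1) ∅) (update_self ..) (S (β + 1))
      rw [update_idem, update_eq_self, update_of_ne (by omega)] at key
      obtain ⟨hS₀, hT⟩ := key.mp hS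
      exact ⟨_, hS₀, _, by rwa [update_of_ne (by omega)], by rw [update_idem, update_eq_self]⟩

noncomputable def kindCount (n : ℕ → ℕ) (β : ℕ) (κ : Kind) : ℕ :=
  #{S ∈ validSeqs n β | kind (n β) (S β) = κ}

def transfer (m : ℕ) (κ κ' : Kind) : ℕ :=
  #{T ∈ successors m κ | kind m T = κ'}

theorem sum_kindCount (n : ℕ → ℕ) (β : ℕ) : ∑ κ, kindCount n β κ = #(validSeqs n β) :=
  (card_eq_sum_card_fiberwise fun _ _ => mem_univ _).symm

theorem sum_transfer (m : ℕ) (κ : Kind) : ∑ κ', transfer m κ κ' = #(successors m κ) :=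
  (card_eq_sum_card_fiberwise fun _ _ => mem_univ _).symm

theorem kindCount_succ (n : ℕ → ℕ) (β : ℕ) (κ' : Kind) :
    kindCount n (β + 1) κ' = ∑ κ, kindCount n β κ * transfer (n (β + 1)) κ κ' := by
  classical
  have hvanish : ∀ S ∈ validSeqs n β, S (β + 1) = ∅ :=
    fun S hS => (mem_validSeqs.mp hS).1 _ le_rfl
  rw [kindCount, validSeqs, filter_biUnion]
  simp only [filter_image, update_self]
  rw [card_biUnion_image_update hvanish]
  refine (sum_fiberwise' _ (fun S : ℕ → Finset ℕ => kind (n β) (S β))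
    (transfer (n (β + 1)) · κ')).symm.trans ?_
  simp [kindCount]

theorem card_validSeqs_zero (n : ℕ → ℕ) : #(validSeqs n 0) = n 0 := by
  classical
  rw [validSeqs, card_image_of_injective _ update_singleton_injective, card_range]

theorem kindCount_zero_empty (n : ℕ → ℕ) : kindCount n 0 .empty = 0 := by
  simp [kindCount, validSeqs, filter_image, kind_eq_empty_iff]

theorem kindCount_zero_top {n : ℕ → ℕ} (hn : 1 ≤ n 0) : kindCount n 0 .top = 1 := by
  classical
  rw [kindCount, validSeqs, filter_image, card_image_of_injective _ update_singleton_injective]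
  simp [kind_eq_top_iff, filter_eq, show 0 < n 0 by omega]

theorem card_successors_empty (m : ℕ) : #(successors m .empty) = 1 := rfl

theorem card_successors_inner (m : ℕ) : #(successors m .inner) = 2 ^ m := by
  simp [successors]

theorem card_successors_top {m : ℕ} (hm : 1 ≤ m) : #(successors m .top) = 2 ^ (m - 1) := by
  have : successors m .top = Icc {0} (range m) := by ext T; simp [successors, and_comm]
  rw [this, card_Icc_finset (by simp; omega)]
  simp

theorem transfer_empty_right (m : ℕ) (κ : Kind) :
    transfer m κ .empty = if κ = .top then 0 else 1 := by
  cases κ <;> simp [transfer, successors, kind_eq_empty_iff, filter_eq']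

theorem transfer_empty_top (m : ℕ) : transfer m .empty .top = 0 := by
  simp [transfer, successors, kind_eq_top_iff]

theorem transfer_inner_top {m : ℕ} (hm : 1 ≤ m) : transfer m .inner .top = 2 ^ (m - 1) := by
  have : {T ∈ successors m .inner | kind m T = .top} = Icc {m - 1} (range m) := by
    ext T; simp [successors, kind_eq_top_iff, and_comm]
  rw [transfer, this, card_Icc_finset (by simp; omega)]
  simp

theorem transfer_top_top {m : ℕ} (hm : 2 ≤ m) : transfer m .top .top = 2 ^ (m - 2) := by
  have : {T ∈ successors m .top | kind m T = .top} = Icc {0, m - 1} (range m) := by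
    ext T; simp [successors, kind_eq_top_iff, insert_subset_iff]; tauto
  rw [transfer, this, card_Icc_finset (by simp [insert_subset_iff]; omega), card_pair (by omega)]
  simp

theorem transfer_inner_eq (m : ℕ) (κ : Kind) :
    (transfer m κ .inner : ℚ) = #(successors m κ) - transfer m κ .empty - transfer m κ .top := by
  rw [← sum_transfer, Kind.sum_univ]
  push_cast
  ring

theorem kindCount_succ_empty (n : ℕ → ℕ) (β : ℕ) :
    kindCount n (β + 1) .empty = kindCount n β .empty + kindCount n β .inner := by
  simp [kindCount_succ, Kind.sum_univ, transfer_empty_right]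

theorem kindCount_succ_inner {n : ℕ → ℕ} {β : ℕ} (hn : 2 ≤ n (β + 1)) :
    (kindCount n (β + 1) .inner : ℚ) = (2 ^ (n (β + 1) - 1) - 1) * kindCount n β .inner
      + 1 / 2 * 2 ^ (n (β + 1) - 1) * kindCount n β .top := by
  obtain ⟨k, hk⟩ : ∃ k, n (β + 1) = k + 2 := ⟨n (β + 1) - 2, by omega⟩
  rw [kindCount_succ, Kind.sum_univ]
  push_cast
  simp only [transfer_inner_eq, transfer_empty_right, transfer_empty_top, card_successors_empty,
    card_successors_inner, card_successors_top (by omega : 1 ≤ n (β + 1)),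
    transfer_inner_top (by omega : 1 ≤ n (β + 1)), transfer_top_top hn]
  rw [hk, show k + 2 - 1 = k + 1 by omega, show k + 2 - 2 = k by omega]
  push_cast
  ring

theorem kindCount_succ_top {n : ℕ → ℕ} {β : ℕ} (hn : 2 ≤ n (β + 1)) :
    (kindCount n (β + 1) .top : ℚ) = 2 ^ (n (β + 1) - 1) * kindCount n β .inner
      + 1 / 2 * 2 ^ (n (β + 1) - 1) * kindCount n β .top := by
  obtain ⟨k, hk⟩ : ∃ k, n (β + 1) = k + 2 := ⟨n (β + 1) - 2, by omega⟩
  rw [kindCount_succ, Kind.sum_univ]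
  push_cast
  simp only [transfer_empty_top, transfer_inner_top (by omega : 1 ≤ n (β + 1)),
    transfer_top_top hn]
  rw [hk, show k + 2 - 1 = k + 1 by omega, show k + 2 - 2 = k by omega]
  push_cast
  ring

noncomputable def substEval (n : ℕ → ℕ) : MvPolynomial Bool (MvPolynomial ℕ ℚ) →+* ℚ :=
  eval₂Hom (MvPolynomial.eval fun j => (2 : ℚ) ^ (n j - 1))
    fun b => if b then (n 0 : ℚ) - 1 else 1 / 2

theorem substEval_smP_zero (n : ℕ → ℕ) : substEval n (smP 0) = n 0 - 1 := by
  simp [substEval, smP, sPair]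

theorem substEval_spP_zero (n : ℕ → ℕ) : substEval n (spP 0) = 1 := by
  simp [substEval, spP, sPair]

theorem substEval_smP_succ (n : ℕ → ℕ) (j : ℕ) :
    substEval n (smP (j + 1)) = (2 ^ (n (j + 1) - 1) - 1) * substEval n (smP j)
      + 1 / 2 * 2 ^ (n (j + 1) - 1) * substEval n (spP j) := by
  simp [substEval, smP, spP, sPair]

theorem substEval_spP_succ (n : ℕ → ℕ) (j : ℕ) :
    substEval n (spP (j + 1)) = 2 ^ (n (j + 1) - 1) * substEval n (smP j)
      + 1 / 2 * 2 ^ (n (j + 1) - 1) * substEval n (spP j) := by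
  simp [substEval, smP, spP, sPair]

theorem kindCount_eq_substEval {n : ℕ → ℕ} {β : ℕ} (hn : ∀ i ≤ β, 2 ≤ n i) :
    (kindCount n β .inner : ℚ) = substEval n (smP β) ∧
      (kindCount n β .top : ℚ) = substEval n (spP β) ∧
      (kindCount n β .empty : ℚ) = ∑ j ∈ range β, substEval n (smP j) := by
  induction β with
  | zero =>
    have h0 : 1 ≤ n 0 := by have := hn 0 le_rfl; omega
    have hsum := sum_kindCount n 0
    rw [Kind.sum_univ, card_validSeqs_zero, kindCount_zero_empty, kindCount_zero_top h0] at hsum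
    refine ⟨?_, ?_, ?_⟩
    · rw [substEval_smP_zero, ← hsum]; push_cast; ring
    · rw [substEval_spP_zero, kindCount_zero_top h0, Nat.cast_one]
    · rw [kindCount_zero_empty, range_zero, sum_empty, Nat.cast_zero]
  | succ β ih =>
    obtain ⟨hinner, htop, hempty⟩ := ih fun i hi => hn i (by omega)
    refine ⟨?_, ?_, ?_⟩
    · rw [kindCount_succ_inner (hn _ le_rfl), substEval_smP_succ, hinner, htop]
    · rw [kindCount_succ_top (hn _ le_rfl), substEval_spP_succ, hinner, htop]
    · rw [kindCount_succ_empty, sum_range_succ, Nat.cast_add, hempty, hinner]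

end Tset

/-- Here `n_{j+1}` of the paper is `n j`. -/
theorem Tset_card_eq_sPoly (α : ℕ) (hα : 1 ≤ α) (n : ℕ → ℕ)
    (hn : ∀ i, i < α → 2 ≤ n i) :
    ((Tset n α).ncard : ℚ) =
      eval₂ (MvPolynomial.eval fun j => (2 : ℚ) ^ (n j - 1))
        (fun b => if b then (n 0 : ℚ) - 1 else 1 / 2)
        (spP (α - 1) + ∑ j ∈ Finset.range α, smP j) := by
  obtain ⟨β, rfl⟩ : ∃ β, α = β + 1 := ⟨α - 1, by omega⟩
  obtain ⟨hinner, htop, hempty⟩ :=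
    Tset.kindCount_eq_substEval (β := β) fun i hi => hn i (by omega)
  have hTset : Tset n (β + 1) = Tset.validSeqs n β := Set.ext fun _ => Tset.mem_validSeqs.symm
  change _ = Tset.substEval n _
  rw [hTset, Set.ncard_coe_finset, ← Tset.sum_kindCount, Tset.Kind.sum_univ, map_add, map_sum,
    sum_range_succ, Nat.add_sub_cancel]
  push_cast
  rw [hinner, htop, hempty]
  ring
end

section
/- Let A_1,…,A_α be complete DFAs over a common alphabet Σ, where A_k has n_k ≥ 2 states and recognizes the language L_k. Then there exists a complete DFA with at most #T_α states recognizing the concatenation L_1·L_2···L_α; in particular the state complexity of L_1·L_2···L_α is at most #T_α. -/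
/-- The state complexity of a language: the least number of states of a complete DFA
(deterministic, with a total transition function, as in Mathlib's `DFA`) recognizing it. -/
noncomputable def sc {Sig : Type} (L : Language Sig) : ℕ :=
  sInf {c | ∃ (Q : Type) (_ : Fintype Q) (D : DFA Sig Q), D.accepts = L ∧ Fintype.card Q = c}

open Equiv

universe u v

theorem Equiv.swap_apply_mem {α : Type*} [DecidableEq α] {s : Set α} {a b x : α} (ha : a ∈ s)
    (hb : b ∈ s) (hx : x ∈ s) : swap a b x ∈ s := by
  rw [swap_apply_def]
  split_ifs <;> assumption

theorem Language.exists_dfa_card_le_ncard {α : Type u} {β : Type v} (L : Language α) {s : Set β}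
    (hs : s.Finite) {g : List α → β} (hgs : ∀ x, g x ∈ s)
    (hL : L.leftQuotient.FactorsThrough g) :
    ∃ (Q : Type u) (_ : Fintype Q) (M : DFA α Q), M.accepts = L ∧ Fintype.card Q ≤ s.ncard := by
  have hrange : Set.range L.leftQuotient ⊆ Function.extend g L.leftQuotient 0 '' s := by
    rintro _ ⟨x, rfl⟩
    exact ⟨g x, hgs x, hL.extend_apply _ x⟩
  have := ((hs.image _).subset hrange).fintype
  refine ⟨_, this, L.toDFA, L.accepts_toDFA, ?_⟩
  calc Fintype.card (Set.range L.leftQuotient)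
      = (Set.range L.leftQuotient).ncard := by rw [← Nat.card_coe_set_eq, Nat.card_eq_fintype_card]
    _ ≤ (Function.extend g L.leftQuotient 0 '' s).ncard := Set.ncard_le_ncard hrange (hs.image _)
    _ ≤ s.ncard := Set.ncard_image_le hs

theorem sc_le_card {Sig Q : Type} [Fintype Q] {L : Language Sig} (M : DFA Sig Q)
    (hM : M.accepts = L) : sc L ≤ Fintype.card Q :=
  Nat.sInf_le ⟨Q, _, M, hM, rfl⟩

theorem Tset_finite (n : ℕ → ℕ) (α : ℕ) : (Tset n α).Finite := by
  refine Set.Finite.of_finite_image (f := fun S (k : Fin α) => S k) ?_ ?_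
  · refine (Set.Finite.pi fun k : Fin α => (Finset.range (n k)).powerset.finite_toSet).subset ?_
    rintro _ ⟨S, hS, rfl⟩ k -
    exact Finset.mem_powerset.2 (hS.2.1 k k.2)
  · intro S hS T hT hST
    funext k
    by_cases hk : k < α
    · exact congrFun hST ⟨k, hk⟩
    · rw [hS.1 k (not_lt.1 hk), hT.1 k (not_lt.1 hk)]

theorem Tset_nonempty {n : ℕ → ℕ} {α : ℕ} (hα : 1 ≤ α) (hn : 2 ≤ n 0) : (Tset n α).Nonempty := by
  refine ⟨fun k => if k = 0 then {0} else ∅, ?_, ?_, ?_, ?_, ?_⟩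
  · intro k hk
    simp [show k ≠ 0 by omega]
  · intro k _
    dsimp only
    split_ifs <;> simp [*]; omega
  · simp
  · simp
  · intro k _ h
    dsimp only at h ⊢
    split_ifs at h with hk <;> simp_all; omega

namespace Catenation

section Cascade

variable {Sig : Type*} {σ : ℕ → Type*} (A : ∀ k, DFA Sig (σ k))

def prefixConcat (k : ℕ) : Language Sig :=
  ((List.range k).map fun i => (A i).accepts).prod

def cascade (w : List Sig) (k : ℕ) : Set (σ k) :=
  {q | ∃ x v, x ∈ prefixConcat A k ∧ x ++ v = w ∧ (A k).eval v = q}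

structure IsCascadeState (F : ∀ k, Set (σ k)) : Prop where
  exists_eq_singleton_zero : ∃ q, F 0 = {q}
  eq_empty_succ : ∀ k, F k = ∅ → F (k + 1) = ∅
  start_mem_succ : ∀ k, ∀ q ∈ F k, q ∈ (A k).accept → (A (k + 1)).start ∈ F (k + 1)

variable {A}

theorem prefixConcat_succ (k : ℕ) :
    prefixConcat A (k + 1) = prefixConcat A k * (A k).accepts := by
  simp [prefixConcat, List.range_succ]

theorem prefixConcat_eq_zero {k α : ℕ} (hk : k < α) (h : (A k).accept = ∅) :
    prefixConcat A α = 0 := by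
  refine List.prod_eq_zero (List.mem_map.2 ⟨k, List.mem_range.2 hk, ?_⟩)
  ext w
  simp [DFA.mem_accepts, h, Language.notMem_zero]

theorem exists_mem_cascade_accept_iff {w : List Sig} {k : ℕ} :
    (∃ q ∈ cascade A w k, q ∈ (A k).accept) ↔ w ∈ prefixConcat A (k + 1) := by
  simp only [cascade, prefixConcat_succ, Language.mem_mul, DFA.mem_accepts]
  constructor
  · rintro ⟨_, ⟨x, v, hx, rfl, rfl⟩, hv⟩
    exact ⟨x, hx, v, hv, rfl⟩
  · rintro ⟨x, hx, v, hv, rfl⟩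
    exact ⟨_, ⟨x, v, hx, rfl, rfl⟩, hv⟩

theorem mem_cascade_append_singleton {w : List Sig} {a : Sig} {k : ℕ} {q : σ k} :
    q ∈ cascade A (w ++ [a]) k ↔
      (∃ p ∈ cascade A w k, (A k).step p a = q) ∨
        (w ++ [a] ∈ prefixConcat A k ∧ (A k).start = q) := by
  constructor
  · rintro ⟨x, v, hx, hxv, rfl⟩
    rcases v.eq_nil_or_concat' with rfl | ⟨u, b, rfl⟩
    · rw [List.append_nil] at hxv
      exact Or.inr ⟨hxv ▸ hx, rfl⟩
    · rw [← List.append_assoc] at hxv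
      obtain ⟨rfl, hba⟩ := List.append_inj' hxv rfl
      obtain rfl : b = a := List.singleton_inj.1 hba
      exact Or.inl ⟨_, ⟨x, u, hx, rfl, rfl⟩, (DFA.eval_append_singleton _ _ _).symm⟩
  · rintro (⟨_, ⟨x, v, hx, rfl, rfl⟩, rfl⟩ | ⟨hw, rfl⟩)
    · exact ⟨x, v ++ [a], hx, (List.append_assoc ..).symm, DFA.eval_append_singleton ..⟩
    · exact ⟨_, [], hw, List.append_nil _, rfl⟩

theorem cascade_append_singleton_congr {w₁ w₂ : List Sig} {k : ℕ}
    (h : ∀ j ≤ k, cascade A w₁ j = cascade A w₂ j) (a : Sig) :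
    ∀ j ≤ k, cascade A (w₁ ++ [a]) j = cascade A (w₂ ++ [a]) j := by
  intro j hj
  induction j with
  | zero =>
    ext q
    simp [mem_cascade_append_singleton, h 0 hj, prefixConcat, Language.mem_one]
  | succ j ih =>
    ext q
    rw [mem_cascade_append_singleton, mem_cascade_append_singleton, h (j + 1) hj,
      ← exists_mem_cascade_accept_iff, ← exists_mem_cascade_accept_iff, ih (by omega)]

theorem cascade_append_congr {w₁ w₂ : List Sig} {k : ℕ}
    (h : ∀ j ≤ k, cascade A w₁ j = cascade A w₂ j) (v : List Sig) :
    ∀ j ≤ k, cascade A (w₁ ++ v) j = cascade A (w₂ ++ v) j := by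
  induction v using List.reverseRecOn with
  | nil => simpa using h
  | append_singleton v a ih =>
    simpa only [← List.append_assoc] using cascade_append_singleton_congr ih a

theorem leftQuotient_prefixConcat_congr {w₁ w₂ : List Sig} {k : ℕ}
    (h : ∀ j ≤ k, cascade A w₁ j = cascade A w₂ j) :
    (prefixConcat A (k + 1)).leftQuotient w₁ = (prefixConcat A (k + 1)).leftQuotient w₂ := by
  ext v
  rw [Language.mem_leftQuotient, Language.mem_leftQuotient, ← exists_mem_cascade_accept_iff,
    ← exists_mem_cascade_accept_iff, cascade_append_congr h v k le_rfl]

theorem isCascadeState_cascade (w : List Sig) : IsCascadeState A (cascade A w) where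
  exists_eq_singleton_zero := ⟨(A 0).eval w, by ext; simp [cascade, prefixConcat, Language.mem_one]⟩
  eq_empty_succ k hk := by
    refine Set.eq_empty_of_forall_notMem ?_
    rintro _ ⟨x, v, hx, rfl, -⟩
    rw [prefixConcat_succ, Language.mem_mul] at hx
    obtain ⟨y, hy, z, -, rfl⟩ := hx
    exact hk.subset ⟨y, z ++ v, hy, (List.append_assoc ..).symm, rfl⟩
  start_mem_succ k q hq hacc := by
    obtain ⟨x, v, hx, rfl, rfl⟩ := hq
    exact ⟨x ++ v, [], exists_mem_cascade_accept_iff.1 ⟨_, ⟨x, v, hx, rfl, rfl⟩, hacc⟩,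
      List.append_nil _, rfl⟩

end Cascade

section Encoding

variable {Sig : Type*} {n : ℕ → ℕ} (A : ∀ k, DFA Sig (Fin (n k))) (f : ∀ k, Fin (n k))

def startPerm (k : ℕ) : Perm ℕ := swap ((A k).start : ℕ) 0

def acceptPerm (k : ℕ) : Perm ℕ := swap (startPerm A k (f k)) (n k - 1) * startPerm A k

variable (α : ℕ)

def levelPerm (next : Finset ℕ) (k : ℕ) : Perm ℕ :=
  if k + 1 < α → 0 ∈ next then startPerm A k else acceptPerm A f k

open Classical in
noncomputable def encode (F : ∀ k, Set (Fin (n k))) (k : ℕ) : Finset ℕ :=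
  if k < α then
    (Finset.univ.filter (· ∈ F k)).map
      (Fin.valEmbedding.trans (levelPerm A f α (encode F (k + 1)) k).toEmbedding)
  else ∅
termination_by α - k

variable {A f α} {F G : ∀ k, Set (Fin (n k))}

theorem startPerm_start {k : ℕ} : startPerm A k (A k).start = 0 := swap_apply_left _ _

theorem acceptPerm_accept {k : ℕ} : acceptPerm A f k (f k) = n k - 1 := by
  rw [acceptPerm, Perm.mul_apply, swap_apply_left]

theorem acceptPerm_start {k : ℕ} (hfs : f k ≠ (A k).start) (hn : 2 ≤ n k) :
    acceptPerm A f k (A k).start = 0 := by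
  rw [acceptPerm, Perm.mul_apply, startPerm_start]
  refine swap_apply_of_ne_of_ne (fun h => hfs (Fin.ext ?_)) (by omega)
  exact (startPerm A k).injective (h.symm.trans startPerm_start.symm)

theorem levelPerm_lt {k : ℕ} (next : Finset ℕ) (q : Fin (n k)) :
    levelPerm A f α next k q < n k := by
  have hs := ((A k).start).isLt
  have hsp : ∀ x < n k, startPerm A k x < n k := fun x hx =>
    swap_apply_mem (s := Set.Iio (n k)) hs (Set.mem_Iio.2 (by omega)) hx
  unfold levelPerm acceptPerm
  split_ifs
  · exact hsp q q.isLt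
  · exact swap_apply_mem (s := Set.Iio (n k)) (hsp _ (f k).isLt) (Set.mem_Iio.2 (by omega))
      (hsp q q.isLt)

theorem encode_of_le {k : ℕ} (hk : α ≤ k) : encode A f α F k = ∅ := by
  rw [encode, if_neg (not_lt.2 hk)]

theorem mem_encode {k : ℕ} (hk : k < α) {x : ℕ} :
    x ∈ encode A f α F k ↔ ∃ q ∈ F k, levelPerm A f α (encode A f α F (k + 1)) k q = x := by
  rw [encode, if_pos hk]
  simp

theorem levelPerm_mem_encode_iff {k : ℕ} (hk : k < α) {q : Fin (n k)} :
    levelPerm A f α (encode A f α F (k + 1)) k q ∈ encode A f α F k ↔ q ∈ F k := by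
  rw [mem_encode hk]
  constructor
  · rintro ⟨p, hp, hpq⟩
    rwa [← Fin.ext (Equiv.injective _ hpq)]
  · exact fun hq => ⟨q, hq, rfl⟩

theorem eq_of_encode_eq {k : ℕ} (h : encode A f α F = encode A f α G) (hk : k < α) : F k = G k := by
  ext q
  rw [← levelPerm_mem_encode_iff hk, ← levelPerm_mem_encode_iff hk, h]

theorem encode_eq_empty_iff {k : ℕ} (hk : k < α) : encode A f α F k = ∅ ↔ F k = ∅ := by
  simp [Finset.eq_empty_iff_forall_notMem, mem_encode hk, Set.eq_empty_iff_forall_notMem]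

theorem zero_mem_encode_of_start_mem {k : ℕ} (hn : ∀ k < α, 2 ≤ n k)
    (hf : ∀ k < α, f k ∈ (A k).accept) (hF : IsCascadeState A F) (hk : k < α)
    (hs : (A k).start ∈ F k) : 0 ∈ encode A f α F k := by
  refine (mem_encode hk).2 ⟨_, hs, ?_⟩
  unfold levelPerm
  split_ifs with hnext
  · exact startPerm_start
  · push Not at hnext
    obtain ⟨hk1, hnot⟩ := hnext
    refine acceptPerm_start (fun hfs => hnot ?_) (hn k hk)
    exact zero_mem_encode_of_start_mem hn hf hF hk1
      (hF.start_mem_succ k _ hs (hfs ▸ hf k hk))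
termination_by α - k

theorem zero_mem_encode_succ {k : ℕ} (hn : ∀ k < α, 2 ≤ n k) (hf : ∀ k < α, f k ∈ (A k).accept)
    (hF : IsCascadeState A F) (hk : k + 1 < α) (h : n k - 1 ∈ encode A f α F k) :
    0 ∈ encode A f α F (k + 1) := by
  obtain ⟨q, hq, hqe⟩ := (mem_encode (by omega)).1 h
  by_cases hnext : k + 1 < α → 0 ∈ encode A f α F (k + 1)
  · exact hnext hk
  · rw [levelPerm, if_neg hnext, ← acceptPerm_accept] at hqe
    obtain rfl : q = f k := Fin.ext ((acceptPerm A f k).injective hqe)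
    exact zero_mem_encode_of_start_mem hn hf hF hk (hF.start_mem_succ k _ hq (hf k (by omega)))

theorem encode_mem_Tset (hn : ∀ k < α, 2 ≤ n k) (hf : ∀ k < α, f k ∈ (A k).accept)
    (hF : IsCascadeState A F) : encode A f α F ∈ Tset n α := by
  refine ⟨fun k hk => encode_of_le hk, fun k hk x hx => ?_, fun hα => ?_,
    fun k hk h => ?_, fun k hk h => zero_mem_encode_succ hn hf hF hk h⟩
  · obtain ⟨q, -, rfl⟩ := (mem_encode hk).1 hx
    exact Finset.mem_range.2 (levelPerm_lt _ q)
  · obtain ⟨q, hq⟩ := hF.exists_eq_singleton_zero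
    refine Finset.card_eq_one.2 ⟨levelPerm A f α (encode A f α F 1) 0 q, Finset.ext fun x => ?_⟩
    simp [mem_encode hα, hq, eq_comm]
  · rw [encode_eq_empty_iff hk, hF.eq_empty_succ k ((encode_eq_empty_iff (by omega)).1 h)]

end Encoding

theorem exists_dfa_prefixConcat_card_le {Sig : Type} {n : ℕ → ℕ} (A : ∀ k, DFA Sig (Fin (n k)))
    {α : ℕ} (hα : 1 ≤ α) (hn : ∀ k < α, 2 ≤ n k) :
    ∃ (Q : Type) (_ : Fintype Q) (M : DFA Sig Q),
      M.accepts = prefixConcat A α ∧ Fintype.card Q ≤ (Tset n α).ncard := by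
  obtain ⟨m, rfl⟩ : ∃ m, α = m + 1 := ⟨α - 1, by omega⟩
  by_cases hacc : ∀ k < m + 1, (A k).accept.Nonempty
  · have : ∀ k, ∃ q : Fin (n k), k < m + 1 → q ∈ (A k).accept := fun k =>
      if hk : k < m + 1 then (hacc k hk).imp fun _ hq _ => hq
      else ⟨(A k).start, fun h => absurd h hk⟩
    choose f hf using this
    exact (prefixConcat A (m + 1)).exists_dfa_card_le_ncard (Tset_finite n _)
      (fun w => encode_mem_Tset hn hf (isCascadeState_cascade w))
      fun w₁ w₂ h => leftQuotient_prefixConcat_congr fun j hj => eq_of_encode_eq h (by omega)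
  · push Not at hacc
    obtain ⟨k, hk, hempty⟩ := hacc
    obtain ⟨S, hS⟩ := Tset_nonempty hα (hn 0 (by omega))
    refine (prefixConcat A (m + 1)).exists_dfa_card_le_ncard (Tset_finite n _) (g := fun _ => S)
      (fun _ => hS) fun w₁ w₂ _ => ?_
    ext v
    simp [prefixConcat_eq_zero hk hempty, Language.notMem_zero]

end Catenation

open Catenation

/-- If `A_1,…,A_α` are complete DFAs over a common alphabet, where `A_k` has `n_k ≥ 2`
states, then there is a complete DFA with at most `#T_α` states recognizing the
concatenation `L(A_1)·L(A_2)···L(A_α)`; in particular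
`sc(L(A_1)·L(A_2)···L(A_α)) ≤ #T_α`. -/
theorem catenation_state_complexity_le (Sig : Type) (α : ℕ) (hα : 1 ≤ α)
    (n : ℕ → ℕ) (hn : ∀ i, i < α → 2 ≤ n i) (A : ∀ k : ℕ, DFA Sig (Fin (n k))) :
    (∃ (Q : Type) (_ : Fintype Q) (D : DFA Sig Q),
      D.accepts = ((List.range α).map fun k => (A k).accepts).prod ∧
      Fintype.card Q ≤ (Tset n α).ncard) ∧
    sc (((List.range α).map fun k => (A k).accepts).prod) ≤ (Tset n α).ncard := by
  obtain ⟨Q, _, M, hM, hcard⟩ := exists_dfa_prefixConcat_card_le A hα hn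
  exact ⟨⟨Q, _, M, hM, hcard⟩, (sc_le_card M hM).trans hcard⟩
end

section
/- In the DFA A obtained by the subset construction from the concatenation NFA (···(A_1·A_2)···)·A_α of the Brzozowski family, any two distinct valid states s = (S_1,…,S_α) and s' = (S'_1,…,S'_α) are non-equivalent: there is a word w such that exactly one of s·w and s'·w contains the final state n_α−1 of A_α. -/
/-- The action of the letter `σ_{ℓ+1}` (encoded `ℓ : ℕ`) on state `i` of the Brzozowski
automaton `A_{k+1}` (encoded `k : ℕ`, with `n k` states `0,…,n k − 1`): the letter
`σ_{k+2}` acts as the cycle `i ↦ i+1 mod n k`, the letter `σ_{k+1}` as the transposition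
of `0` and `1`, the letter `σ_k` (for `k ≥ 1`) as the contraction sending `1` to `0`,
and every other letter as the identity. -/
def brzStep (n : ℕ → ℕ) (k : ℕ) (ℓ : ℕ) (i : ℕ) : ℕ :=
  if ℓ = k + 1 then (i + 1) % n k
  else if ℓ = k then (if i = 0 then 1 else if i = 1 then 0 else i)
  else if ℓ + 1 = k then (if i = 1 then 0 else i)
  else i

/-- The concatenation NFA `(···(A_1·A_2)···)·A_α` of the Brzozowski family, over the
alphabet `Σ = {σ_1,…,σ_{α+1}}` (encoded `Fin (α+1)`).  Its states are pairs `(k, i)`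
with `k` the (0-based) index of an automaton and `i` one of its states; the transition
from `(k, i)` follows `A_{k+1}` and, whenever the final state `n k − 1` of `A_{k+1}` is
entered and `k + 1 < α`, also enters the initial state `0` of `A_{k+2}`.  The initial
set is `{(0,0)}` (the initial state of `A_1`, which is not final since `n_1 ≥ 3`) and
the final set is the final state of `A_α`. -/
def catNFA (α : ℕ) (n : ℕ → ℕ) : NFA (Fin (α + 1)) (ℕ × ℕ) where
  step q ℓ :=
    {(q.1, brzStep n q.1 ℓ.val q.2)} ∪
      {p | brzStep n q.1 ℓ.val q.2 = n q.1 - 1 ∧ q.1 + 1 < α ∧ p = (q.1 + 1, 0)}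
  start := {(0, 0)}
  accept := {(α - 1, n (α - 1) - 1)}

/-- The subset of states of the concatenation NFA corresponding to the tuple
`(S_1,…,S_α)` (indexed here from `0`). -/
def tupleSet (α : ℕ) (S : ℕ → Finset ℕ) : Set (ℕ × ℕ) :=
  {q | q.1 < α ∧ q.2 ∈ S q.1}

/-! ### Tuple-level dynamics -/

/-- Tuple-level transition of the subset construction. -/
def stepT (n : ℕ → ℕ) (α : ℕ) (ℓ : ℕ) (S : ℕ → Finset ℕ) : ℕ → Finset ℕ :=
  fun k =>
    if k < α then
      (S k).image (brzStep n k ℓ) ∪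
        (if 1 ≤ k ∧ n (k - 1) - 1 ∈ (S (k - 1)).image (brzStep n (k - 1) ℓ) then {0} else ∅)
    else ∅

/-- Tuple-level evaluation of a word. -/
def evalT (n : ℕ → ℕ) (α : ℕ) (w : List (Fin (α + 1))) (S : ℕ → Finset ℕ) : ℕ → Finset ℕ :=
  w.foldl (fun S ℓ => stepT n α ℓ.val S) S

lemma evalT_nil (n α S) : evalT n α [] S = S := rfl
lemma evalT_cons (n α a w S) : evalT n α (a :: w) S = evalT n α w (stepT n α a.val S) := rfl
lemma evalT_append (n α w₁ w₂ S) :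
    evalT n α (w₁ ++ w₂) S = evalT n α w₂ (evalT n α w₁ S) := List.foldl_append
lemma evalT_singleton (n α a S) : evalT n α [a] S = stepT n α a.val S := rfl

lemma stepT_eq (n α ℓ S k) (hk : k < α) :
    stepT n α ℓ S k =
      (S k).image (brzStep n k ℓ) ∪
        (if 1 ≤ k ∧ n (k - 1) - 1 ∈ (S (k - 1)).image (brzStep n (k - 1) ℓ) then {0} else ∅) :=
  if_pos hk

/-! ### brzStep computations -/

lemma brz_cycle (n k i) : brzStep n k (k + 1) i = (i + 1) % n k := by simp [brzStep]

lemma brz_swap (n k i) :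
    brzStep n k k i = if i = 0 then 1 else if i = 1 then 0 else i := by
  unfold brzStep; rw [if_neg (by omega), if_pos rfl]

lemma brz_contr (n k i) : brzStep n (k + 1) k i = if i = 1 then 0 else i := by
  unfold brzStep; rw [if_neg (by omega), if_neg (by omega), if_pos rfl]

lemma brz_id (n k ℓ i) (h1 : ℓ ≠ k + 1) (h2 : ℓ ≠ k) (h3 : ℓ + 1 ≠ k) :
    brzStep n k ℓ i = i := by
  unfold brzStep; rw [if_neg h1, if_neg h2, if_neg h3]

lemma brz_lt (n k ℓ i) (hn3 : 3 ≤ n k) (hi : i < n k) : brzStep n k ℓ i < n k := by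
  unfold brzStep
  have h0 : 0 < n k := by omega
  split_ifs <;> first
    | exact Nat.mod_lt _ h0
    | omega

lemma succ_mod_inj {n1 y x : ℕ} (hy : y < n1) (hx : x < n1)
    (h : (y + 1) % n1 = (x + 1) % n1) : y = x := by
  rcases Nat.lt_or_ge (y + 1) n1 with h1 | h1 <;> rcases Nat.lt_or_ge (x + 1) n1 with h2 | h2
  · rw [Nat.mod_eq_of_lt h1, Nat.mod_eq_of_lt h2] at h; omega
  · have hx1 : x + 1 = n1 := by omega
    rw [Nat.mod_eq_of_lt h1, hx1, Nat.mod_self] at h; omega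
  · have hy1 : y + 1 = n1 := by omega
    rw [hy1, Nat.mod_self, Nat.mod_eq_of_lt h2] at h; omega
  · omega

/-! ### Tset facts -/

lemma Tset_lt {n α} {S : ℕ → Finset ℕ} (hS : S ∈ Tset n α) {k y : ℕ} (hk : k < α)
    (hy : y ∈ S k) : y < n k :=
  Finset.mem_range.1 (hS.2.1 k hk hy)

lemma stepT_Tset {n α} (hn : ∀ k, k < α → 3 ≤ n k) (ℓ : ℕ) {S : ℕ → Finset ℕ}
    (hS : S ∈ Tset n α) : stepT n α ℓ S ∈ Tset n α := by
  obtain ⟨h0, hrange, hcard, hP2, hP3⟩ := hS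
  refine ⟨?_, ?_, ?_, ?_, ?_⟩
  · intro k hk
    simp [stepT, Nat.not_lt.2 hk]
  · intro k hk x hx
    rw [stepT_eq n α ℓ S k hk, Finset.mem_union] at hx
    rcases hx with hx | hx
    · obtain ⟨y, hy, rfl⟩ := Finset.mem_image.mp hx
      exact Finset.mem_range.2
        (brz_lt n k ℓ y (hn k hk) (Finset.mem_range.1 (hrange k hk hy)))
    · split_ifs at hx
      · have : x = 0 := Finset.mem_singleton.mp hx
        subst this
        exact Finset.mem_range.2 (by have := hn k hk; omega)
      · exact absurd hx (Finset.notMem_empty _)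
  · intro h0α
    rw [stepT_eq n α ℓ S 0 h0α, if_neg (by omega), Finset.union_empty]
    obtain ⟨a, ha⟩ := Finset.card_eq_one.mp (hcard h0α)
    rw [ha]
    simp
  · intro k hk hSk
    have hk' : k < α := by omega
    rw [stepT_eq n α ℓ S k hk'] at hSk
    have himg : (S k).image (brzStep n k ℓ) = ∅ := (Finset.union_eq_empty.mp hSk).1
    have hSk0 : S k = ∅ := Finset.image_eq_empty.mp himg
    rw [stepT_eq n α ℓ S (k + 1) hk]
    rw [hP2 k hk hSk0, Finset.image_empty, if_neg (by
      rintro ⟨-, hc⟩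
      rw [show k + 1 - 1 = k from rfl, hSk0, Finset.image_empty] at hc
      exact absurd hc (Finset.notMem_empty _)), Finset.union_empty]
  · intro k hk hmem
    have hk' : k < α := by omega
    have hnk := hn k hk'
    rw [stepT_eq n α ℓ S k hk', Finset.mem_union] at hmem
    have himg : n k - 1 ∈ (S k).image (brzStep n k ℓ) := by
      rcases hmem with h | h
      · exact h
      · split_ifs at h
        · exact absurd (Finset.mem_singleton.mp h) (by omega)
        · exact absurd h (Finset.notMem_empty _)
    rw [stepT_eq n α ℓ S (k + 1) hk]
    refine Finset.mem_union_right _ ?_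
    rw [if_pos ⟨by omega, by rw [show k + 1 - 1 = k from rfl]; exact himg⟩]
    exact Finset.mem_singleton_self 0

lemma evalT_Tset {n α} (hn : ∀ k, k < α → 3 ≤ n k) (w : List (Fin (α + 1)))
    {S : ℕ → Finset ℕ} (hS : S ∈ Tset n α) : evalT n α w S ∈ Tset n α := by
  induction w generalizing S with
  | nil => exact hS
  | cons a w ih => exact ih (stepT_Tset hn a.val hS)

/-! ### Bridge to the DFA -/

lemma stepSet_tupleSet (α : ℕ) (n : ℕ → ℕ) (a : Fin (α + 1)) (S : ℕ → Finset ℕ) :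
    (catNFA α n).stepSet (tupleSet α S) a = tupleSet α (stepT n α a.val S) := by
  ext ⟨m, i⟩
  rw [NFA.mem_stepSet]
  constructor
  · rintro ⟨⟨q1, q2⟩, ⟨hq1, hq2⟩, hstep⟩
    simp only [catNFA, Set.mem_union, Set.mem_singleton_iff, Set.mem_setOf_eq,
      Prod.mk.injEq] at hstep
    rcases hstep with ⟨rfl, rfl⟩ | ⟨hb, hlt, rfl, rfl⟩
    · refine ⟨hq1, ?_⟩
      rw [stepT_eq n α a.val S _ hq1]
      exact Finset.mem_union_left _ (Finset.mem_image.mpr ⟨q2, hq2, rfl⟩)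
    · refine ⟨hlt, ?_⟩
      rw [stepT_eq n α a.val S (q1 + 1) hlt]
      refine Finset.mem_union_right _ ?_
      rw [if_pos ⟨by omega, by
        rw [show q1 + 1 - 1 = q1 from rfl]
        exact Finset.mem_image.mpr ⟨q2, hq2, hb⟩⟩]
      exact Finset.mem_singleton_self 0
  · rintro ⟨hm, hi⟩
    rw [stepT_eq n α a.val S m hm, Finset.mem_union] at hi
    rcases hi with hi | hi
    · obtain ⟨y, hy, rfl⟩ := Finset.mem_image.mp hi
      exact ⟨(m, y), ⟨hm, hy⟩, Or.inl rfl⟩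
    · split_ifs at hi with hc
      · obtain ⟨h1m, himg⟩ := hc
        obtain ⟨y, hy, hb⟩ := Finset.mem_image.mp himg
        have hi0 : i = 0 := Finset.mem_singleton.mp hi
        subst hi0
        refine ⟨(m - 1, y), ⟨by omega, hy⟩, Or.inr ⟨hb, by omega, ?_⟩⟩
        have : m - 1 + 1 = m := by omega
        rw [this]
      · exact absurd hi (Finset.notMem_empty _)

lemma evalFrom_tupleSet (α : ℕ) (n : ℕ → ℕ) (w : List (Fin (α + 1))) (S : ℕ → Finset ℕ) :
    (catNFA α n).toDFA.evalFrom (tupleSet α S) w = tupleSet α (evalT n α w S) := by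
  induction w generalizing S with
  | nil => rfl
  | cons a w ih =>
    have h1 : (catNFA α n).toDFA.evalFrom (tupleSet α S) (a :: w) =
        (catNFA α n).toDFA.evalFrom ((catNFA α n).toDFA.step (tupleSet α S) a) w := rfl
    rw [h1, show (catNFA α n).toDFA.step (tupleSet α S) a
        = (catNFA α n).stepSet (tupleSet α S) a from rfl,
      stepSet_tupleSet, ih, evalT_cons]

/-! ### Phase lemmas -/

section Phases

variable {α : ℕ} {n : ℕ → ℕ}

/-- single step of the cycle letter `k+1` on level `k`. -/
lemma step_cycle {S : ℕ → Finset ℕ} (hS : S ∈ Tset n α) {k m : ℕ} (hk : k < α)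
    (hm : m + 1 < n k) : m + 1 ∈ stepT n α (k + 1) S k ↔ m ∈ S k := by
  rw [stepT_eq n α (k + 1) S k hk, Finset.mem_union]
  constructor
  · rintro (h | h)
    · obtain ⟨y, hy, hb⟩ := Finset.mem_image.mp h
      rw [brz_cycle] at hb
      have hylt : y < n k := Tset_lt hS hk hy
      have hym : y = m := by
        rcases Nat.lt_or_ge (y + 1) (n k) with h1 | h1
        · rw [Nat.mod_eq_of_lt h1] at hb; omega
        · have : y + 1 = n k := by omega
          rw [this, Nat.mod_self] at hb; omega
      exact hym ▸ hy
    · split_ifs at h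
      · exact absurd (Finset.mem_singleton.mp h) (by omega)
      · exact absurd h (Finset.notMem_empty _)
  · intro h
    have hb : brzStep n k (k + 1) m = m + 1 := by rw [brz_cycle, Nat.mod_eq_of_lt hm]
    exact Or.inl (Finset.mem_image.mpr ⟨m, h, hb⟩)

/-- Phase 0: rotating level `k` with the letter `k+1`. -/
lemma rot0 (hn : ∀ k, k < α → 3 ≤ n k) {k : ℕ} (hk : k < α) (a : Fin (α + 1))
    (ha : (a : ℕ) = k + 1) :
    ∀ t (S : ℕ → Finset ℕ), S ∈ Tset n α → ∀ m, m + t < n k →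
      ((m + t ∈ evalT n α (List.replicate t a) S k) ↔ m ∈ S k) := by
  intro t
  induction t with
  | zero => intro S hS m hm; rfl
  | succ t ih =>
    intro S hS m hm
    rw [List.replicate_succ, evalT_cons, ha]
    have hstep := stepT_Tset hn (k + 1) hS
    have h1 := ih (stepT n α (k + 1) S) hstep (m + 1) (by omega)
    rw [show m + (t + 1) = m + 1 + t from by omega, h1]
    exact step_cycle hS hk (by omega)

/-- Phase 2, missing side: rotating level `k+1` with the letter `k+2`, with no flag below. -/
lemma rot2_miss (hn : ∀ k, k < α → 3 ≤ n k) {k : ℕ} (hk1 : k + 1 < α) (a : Fin (α + 1))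
    (ha : (a : ℕ) = k + 2) :
    ∀ t (S : ℕ → Finset ℕ), S ∈ Tset n α → n k - 1 ∉ S k →
      ∀ x, x < n (k + 1) → x ∉ S (k + 1) →
      (x + t) % n (k + 1) ∉ evalT n α (List.replicate t a) S (k + 1) := by
  have hk : k < α := by omega
  have hid : ∀ i, brzStep n k (k + 2) i = i := fun i => brz_id n k (k + 2) i
    (by omega) (by omega) (by omega)
  have himgid : ∀ (T : Finset ℕ), T.image (brzStep n k (k + 2)) = T := by
    intro T
    refine Finset.image_congr (fun x _ => hid x) |>.trans (Finset.image_id)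
  intro t
  induction t with
  | zero =>
    intro S hS hflag x hx hxS
    simp only [Nat.add_zero, Nat.mod_eq_of_lt hx]
    exact hxS
  | succ t ih =>
    intro S hS hflag x hx hxS
    rw [List.replicate_succ, evalT_cons, ha]
    have hS1 : stepT n α (k + 2) S ∈ Tset n α := stepT_Tset hn (k + 2) hS
    have hn1 := hn (k + 1) hk1
    -- flag stays off at level k
    have hflag1 : n k - 1 ∉ stepT n α (k + 2) S k := by
      rw [stepT_eq n α (k + 2) S k hk, Finset.mem_union]
      rintro (h | h)
      · rw [himgid] at h; exact hflag h
      · split_ifs at h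
        · have := Finset.mem_singleton.mp h
          have := hn k hk; omega
        · exact absurd h (Finset.notMem_empty _)
    -- missing element moves on at level k+1
    have hxS1 : (x + 1) % n (k + 1) ∉ stepT n α (k + 2) S (k + 1) := by
      rw [stepT_eq n α (k + 2) S (k + 1) hk1, Finset.mem_union]
      rintro (h | h)
      · obtain ⟨y, hy, hb⟩ := Finset.mem_image.mp h
        rw [show k + 2 = (k + 1) + 1 from rfl, brz_cycle] at hb
        have hylt : y < n (k + 1) := Tset_lt hS hk1 hy
        have : y = x := succ_mod_inj hylt hx hb
        exact hxS (this ▸ hy)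
      · rw [if_neg (by
          rintro ⟨-, hc⟩
          rw [show k + 1 - 1 = k from rfl, himgid] at hc
          exact hflag hc)] at h
        exact absurd h (Finset.notMem_empty _)
    have := ih (stepT n α (k + 2) S) hS1 hflag1 ((x + 1) % n (k + 1))
      (Nat.mod_lt _ (by omega)) hxS1
    rw [Nat.mod_add_mod, show x + 1 + t = x + (t + 1) from by omega] at this
    exact this

/-- Phase 2, flag side: the flag keeps injecting `0` into level `k+1`. -/
lemma rot2_hit (hn : ∀ k, k < α → 3 ≤ n k) {k : ℕ} (hk1 : k + 1 < α) (a : Fin (α + 1))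
    (ha : (a : ℕ) = k + 2) :
    ∀ t (S : ℕ → Finset ℕ), S ∈ Tset n α → n k - 1 ∈ S k →
      0 ∈ evalT n α (List.replicate (t + 1) a) S (k + 1) := by
  have hk : k < α := by omega
  have hid : ∀ i, brzStep n k (k + 2) i = i := fun i => brz_id n k (k + 2) i
    (by omega) (by omega) (by omega)
  have hzero : ∀ (S : ℕ → Finset ℕ), n k - 1 ∈ S k → 0 ∈ stepT n α (k + 2) S (k + 1) := by
    intro S hf
    rw [stepT_eq n α (k + 2) S (k + 1) hk1]
    refine Finset.mem_union_right _ ?_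
    rw [if_pos ⟨by omega, by
      rw [show k + 1 - 1 = k from rfl]
      exact Finset.mem_image.mpr ⟨n k - 1, hf, hid _⟩⟩]
    exact Finset.mem_singleton_self 0
  have hkeep : ∀ (S : ℕ → Finset ℕ), n k - 1 ∈ S k → n k - 1 ∈ stepT n α (k + 2) S k := by
    intro S hf
    rw [stepT_eq n α (k + 2) S k hk]
    exact Finset.mem_union_left _ (Finset.mem_image.mpr ⟨n k - 1, hf, hid _⟩)
  intro t
  induction t with
  | zero =>
    intro S hS hf
    rw [List.replicate_succ, List.replicate_zero, evalT_cons, evalT_nil, ha]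
    exact hzero S hf
  | succ t ih =>
    intro S hS hf
    rw [List.replicate_succ, evalT_cons, ha]
    exact ih (stepT n α (k + 2) S) (stepT_Tset hn (k + 2) hS) (hkeep S hf)

/-- Phase 1: the letter `k` keeps the flag at level `k`. -/
lemma p1_flag (hn : ∀ k, k < α → 3 ≤ n k) {k : ℕ} (hk : k < α) (S : ℕ → Finset ℕ) :
    n k - 1 ∈ stepT n α k S k ↔ n k - 1 ∈ S k := by
  have hnk := hn k hk
  rw [stepT_eq n α k S k hk, Finset.mem_union]
  constructor
  · rintro (h | h)
    · obtain ⟨y, hy, hb⟩ := Finset.mem_image.mp h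
      rw [brz_swap] at hb
      split_ifs at hb <;> first | omega | exact hb ▸ hy
    · split_ifs at h
      · have := Finset.mem_singleton.mp h; omega
      · exact absurd h (Finset.notMem_empty _)
  · intro h
    have hb : brzStep n k k (n k - 1) = n k - 1 := by
      rw [brz_swap, if_neg (by omega), if_neg (by omega)]
    exact Or.inl (Finset.mem_image.mpr ⟨n k - 1, h, hb⟩)

/-- Phase 1: the letter `k` contracts level `k+1`, so `1` is absent afterwards. -/
lemma p1_no1 {k : ℕ} (hk1 : k + 1 < α) (S : ℕ → Finset ℕ) :
    1 ∉ stepT n α k S (k + 1) := by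
  rw [stepT_eq n α k S (k + 1) hk1, Finset.mem_union]
  rintro (h | h)
  · obtain ⟨y, hy, hb⟩ := Finset.mem_image.mp h
    rw [brz_contr] at hb
    split_ifs at hb <;> omega
  · split_ifs at h
    · have := Finset.mem_singleton.mp h; omega
    · exact absurd h (Finset.notMem_empty _)

/-! ### Core distinguishability -/

lemma core (hα : 1 ≤ α) (hn : ∀ k, k < α → 3 ≤ n k) :
    ∀ d k, k < α → α - k ≤ d → ∀ S S', S ∈ Tset n α → S' ∈ Tset n α →
      ∀ j, j ∈ S k → j ∉ S' k →
      ∃ w : List (Fin (α + 1)),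
        n (α - 1) - 1 ∈ evalT n α w S (α - 1) ∧ n (α - 1) - 1 ∉ evalT n α w S' (α - 1) := by
  intro d
  induction d with
  | zero => intro k hk hd; omega
  | succ d ih =>
    intro k hk hd S S' hS hS' j hj hj'
    have hnk := hn k hk
    have hjlt : j < n k := Tset_lt hS hk hj
    set t0 := n k - 1 - j with ht0
    have hk1 : k + 1 < α + 1 := by omega
    set a1 : Fin (α + 1) := ⟨k + 1, hk1⟩ with ha1
    set w0 := List.replicate t0 a1 with hw0
    have hP : evalT n α w0 S ∈ Tset n α := evalT_Tset hn w0 hS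
    have hP' : evalT n α w0 S' ∈ Tset n α := evalT_Tset hn w0 hS'
    have hflag : n k - 1 ∈ evalT n α w0 S k := by
      have := rot0 hn hk a1 rfl t0 S hS j (by omega)
      rw [show j + t0 = n k - 1 from by omega] at this
      exact this.mpr hj
    have hflag' : n k - 1 ∉ evalT n α w0 S' k := by
      intro h
      have := rot0 hn hk a1 rfl t0 S' hS' j (by omega)
      rw [show j + t0 = n k - 1 from by omega] at this
      exact hj' (this.mp h)
    by_cases hka : k + 1 = α
    · exact ⟨w0, by rw [show α - 1 = k from by omega]; exact hflag,
        by rw [show α - 1 = k from by omega]; exact hflag'⟩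
    · have hk1α : k + 1 < α := by omega
      have hn1 := hn (k + 1) hk1α
      set a2 : Fin (α + 1) := ⟨k, by omega⟩ with ha2
      set Q := stepT n α k (evalT n α w0 S) with hQdef
      set Q' := stepT n α k (evalT n α w0 S') with hQ'def
      have hQ : Q ∈ Tset n α := stepT_Tset hn k hP
      have hQ' : Q' ∈ Tset n α := stepT_Tset hn k hP'
      have hQf : n k - 1 ∈ Q k := (p1_flag hn hk _).mpr hflag
      have hQ'f : n k - 1 ∉ Q' k := fun h => hflag' ((p1_flag hn hk _).mp h)
      have hQ'1 : (1 : ℕ) ∉ Q' (k + 1) := p1_no1 hk1α _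
      set a3 : Fin (α + 1) := ⟨k + 2, by omega⟩ with ha3
      set w2 := List.replicate (n (k + 1) - 1) a3 with hw2
      set B := evalT n α w2 Q with hBdef
      set B' := evalT n α w2 Q' with hB'def
      have hB : B ∈ Tset n α := evalT_Tset hn w2 hQ
      have hB' : B' ∈ Tset n α := evalT_Tset hn w2 hQ'
      have hB0 : (0 : ℕ) ∈ B (k + 1) := by
        have := rot2_hit hn hk1α a3 rfl (n (k + 1) - 2) Q hQ hQf
        rw [show n (k + 1) - 2 + 1 = n (k + 1) - 1 from by omega] at this
        exact this
      have hB'0 : (0 : ℕ) ∉ B' (k + 1) := by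
        have := rot2_miss hn hk1α a3 rfl (n (k + 1) - 1) Q' hQ' hQ'f 1 (by omega) hQ'1
        rw [show (1 + (n (k + 1) - 1)) % n (k + 1) = 0 from by
          rw [show 1 + (n (k + 1) - 1) = n (k + 1) from by omega, Nat.mod_self]] at this
        exact this
      obtain ⟨w', hw1, hw2'⟩ := ih (k + 1) hk1α (by omega) B B' hB hB' 0 hB0 hB'0
      refine ⟨((w0 ++ [a2]) ++ w2) ++ w', ?_, ?_⟩
      · rw [evalT_append, evalT_append, evalT_append, evalT_singleton]
        exact hw1
      · rw [evalT_append, evalT_append, evalT_append, evalT_singleton]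
        exact hw2'

end Phases

/-- In the DFA obtained by the subset construction from the concatenation NFA of the
Brzozowski family, any two distinct valid states `(S_1,…,S_α)` and `(S'_1,…,S'_α)` are
non-equivalent: some word `w` sends exactly one of them to a set containing the final
state `n_α − 1` of `A_α`. -/
theorem brz_valid_states_pairwise_nonequivalent (α : ℕ) (hα : 1 ≤ α) (n : ℕ → ℕ)
    (hn : ∀ k, k < α → 3 ≤ n k) (S S' : ℕ → Finset ℕ)
    (hS : S ∈ Tset n α) (hS' : S' ∈ Tset n α) (hne : S ≠ S') :
    ∃ w : List (Fin (α + 1)),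
      ¬ (((α - 1, n (α - 1) - 1) ∈ (catNFA α n).toDFA.evalFrom (tupleSet α S) w) ↔
         ((α - 1, n (α - 1) - 1) ∈ (catNFA α n).toDFA.evalFrom (tupleSet α S') w)) := by
  have hmem : ∀ (T : ℕ → Finset ℕ),
      ((α - 1, n (α - 1) - 1) ∈ tupleSet α T) ↔ n (α - 1) - 1 ∈ T (α - 1) :=
    fun T => ⟨fun h => h.2, fun h => ⟨by omega, h⟩⟩
  have hkne : ∃ k, S k ≠ S' k := by
    by_contra h
    push_neg at h
    exact hne (funext h)
  obtain ⟨k, hkne⟩ := hkne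
  have hk : k < α := by
    by_contra h
    push_neg at h
    exact hkne (by rw [hS.1 k h, hS'.1 k h])
  have hj : ∃ j, (j ∈ S k ∧ j ∉ S' k) ∨ (j ∈ S' k ∧ j ∉ S k) := by
    by_contra h
    push_neg at h
    apply hkne
    ext j
    have := h j
    tauto
  obtain ⟨j, hj | hj⟩ := hj
  · obtain ⟨w, h1, h2⟩ := core hα hn α k hk (by omega) S S' hS hS' j hj.1 hj.2
    refine ⟨w, ?_⟩
    rw [evalFrom_tupleSet, evalFrom_tupleSet, hmem, hmem]
    tauto
  · obtain ⟨w, h1, h2⟩ := core hα hn α k hk (by omega) S' S hS' hS j hj.1 hj.2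
    refine ⟨w, ?_⟩
    rw [evalFrom_tupleSet, evalFrom_tupleSet, hmem, hmem]
    tauto
end

section
/- In the DFA A obtained by the subset construction from the concatenation NFA A_1·A_2 of the two-letter Brzozowski pair, every valid state (p_i, S), i.e. every subset {p_i} ∪ {q_j : j ∈ S} with 0 ≤ i ≤ m−1, S ⊆ {0,…,n−1}, and q_0 ∈ S whenever i = m−1, is accessible from the initial state of A. -/
/-- The concatenation NFA `A·B` of two NFAs with disjoint state sets (modelled by the
sum type `σ₁ ⊕ σ₂`): its states are `Q_A ∪ Q_B`, its final states are `F_B`,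
its initial states are `I_A` if `I_A ∩ F_A = ∅` and `I_A ∪ I_B` otherwise, and its
transitions are: for `q ∈ Q_B`, `δ(q,x) = δ_B(q,x)`; for `q ∈ Q_A`,
`δ(q,x) = δ_A(q,x)` if `δ_A(q,x) ∩ F_A = ∅`, and `δ(q,x) = δ_A(q,x) ∪ I_B` otherwise. -/
def nfaConcat {Sig σ₁ σ₂ : Type*} (A : NFA Sig σ₁) (B : NFA Sig σ₂) :
    NFA Sig (σ₁ ⊕ σ₂) where
  step q a :=
    match q with
    | Sum.inl q =>
        Sum.inl '' A.step q a ∪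
          {x | (A.step q a ∩ A.accept).Nonempty ∧ x ∈ Sum.inr '' B.start}
    | Sum.inr q => Sum.inr '' B.step q a
  start :=
    Sum.inl '' A.start ∪ {x | (A.start ∩ A.accept).Nonempty ∧ x ∈ Sum.inr '' B.start}
  accept := Sum.inr '' B.accept

/-- The first DFA of the two-letter Brzozowski pair: states `p_0,…,p_{m−1}`, initial
state `p_0`, unique final state `p_{m−1}`; the letter `a` (encoded `0 : Fin 2`) acts as
the cyclic permutation `p_i ↦ p_{(i+1) mod m}` and `b` (encoded `1`) acts as the
transposition exchanging `p_0` and `p_1`. -/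
def dfaW1 (m : ℕ) (h : 0 < m) : DFA (Fin 2) (Fin m) where
  step i x :=
    if x = 0 then ⟨(i.val + 1) % m, Nat.mod_lt _ h⟩
    else ⟨(if i.val = 0 then 1 else if i.val = 1 then 0 else i.val) % m, Nat.mod_lt _ h⟩
  start := ⟨0, h⟩
  accept := {⟨m - 1, by omega⟩}

/-- The second DFA of the two-letter Brzozowski pair: states `q_0,…,q_{n−1}`, initial
state `q_0`, unique final state `q_{n−1}`; the letter `a` acts as the cyclic permutation
`q_j ↦ q_{(j+1) mod n}` and `b` acts as the contraction sending `q_1` to `q_0` and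
fixing all other states. -/
def dfaW2 (n : ℕ) (h : 0 < n) : DFA (Fin 2) (Fin n) where
  step j x :=
    if x = 0 then ⟨(j.val + 1) % n, Nat.mod_lt _ h⟩
    else ⟨(if j.val = 1 then 0 else j.val) % n, Nat.mod_lt _ h⟩
  start := ⟨0, h⟩
  accept := {⟨n - 1, by omega⟩}

/-! Write `(p_i, S)` for the state `{p_i} ∪ {q_j : j ∈ S}` of the subset automaton and read
indices modulo `m` and `n`. The letter `a` sends `(p_i, S)` to `(p_{i+1}, S + 1)`, adding `q_0`
exactly when `i + 1 = m - 1`; from `p_1` the letter `b` returns to `p_0` and fixes `S` as long as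
`q_1 ∉ S`. We induct on `|S|`. A state `(p_{m-1}, S)` with `q_0 ∈ S` comes by `a` from
`(p_{m-2}, (S \ {q_0}) - 1)`, which has a smaller set. Every other state with `S ≠ ∅` is reached
from some `(p_{m-1}, U)` with `|U| = |S|`: `(p_i, S)` comes by `a^i` from `(p_0, S - i)`, and
`(p_0, V)` comes by `a` from `(p_{m-1}, V - 1)` if `q_1 ∈ V`, and otherwise by `ab` from
`(p_0, V - 1)`, whose elements are one step closer to `q_1`. -/

open Set Pointwise
open scoped Fin.CommRing

namespace Fin

variable {m : ℕ} [NeZero m]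

theorem val_neg_one_of_neZero : ((-1 : Fin m) : ℕ) = m - 1 := by
  obtain ⟨k, rfl⟩ := Nat.exists_eq_succ_of_ne_zero (NeZero.ne m)
  simp [Fin.coe_neg_one]

theorem eq_neg_one_iff {i : Fin m} : i = -1 ↔ i.val = m - 1 := by
  rw [Fin.ext_iff, val_neg_one_of_neZero]

theorem natCast_ne_neg_one {k : ℕ} (hk : k + 2 ≤ m) : (k : Fin m) ≠ -1 := by
  rw [Ne, eq_neg_one_iff, val_natCast, Nat.mod_eq_of_lt (by omega)]
  omega

theorem zero_ne_neg_one (hm : 2 ≤ m) : (0 : Fin m) ≠ -1 := by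
  simpa using natCast_ne_neg_one (k := 0) hm

end Fin

namespace DFA

variable {α σ : Type*}

def IsAccessible (M : DFA α σ) (s : σ) : Prop := ∃ w : List α, M.eval w = s

theorem isAccessible_start (M : DFA α σ) : M.IsAccessible M.start := ⟨[], rfl⟩

theorem IsAccessible.step {M : DFA α σ} {s : σ} (hs : M.IsAccessible s) (a : α) :
    M.IsAccessible (M.step s a) :=
  let ⟨w, hw⟩ := hs
  ⟨w ++ [a], by rw [eval_append_singleton, hw]⟩

end DFA

section Concatenation

variable {α σ₁ σ₂ : Type*}

def concatState (p : σ₁) (S : Set σ₂) : Set (σ₁ ⊕ σ₂) := {Sum.inl p} ∪ Sum.inr '' S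

theorem nfaConcat_toDFA_start (A : DFA α σ₁) (B : DFA α σ₂) (h : A.start ∉ A.accept) :
    (nfaConcat A.toNFA B.toNFA).toDFA.start = concatState A.start ∅ := by
  ext (q | q) <;> simp [concatState, NFA.toDFA, nfaConcat, h]

theorem nfaConcat_toDFA_step_concatState (A : DFA α σ₁) (B : DFA α σ₂) (p : σ₁)
    (S : Set σ₂) (x : α) :
    (nfaConcat A.toNFA B.toNFA).toDFA.step (concatState p S) x =
      concatState (A.step p x)
        ((B.step · x) '' S ∪ {q | A.step p x ∈ A.accept ∧ q = B.start}) := by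
  ext (q | q) <;> simp [concatState, NFA.toDFA, NFA.mem_stepSet, nfaConcat, eq_comm, or_comm]

end Concatenation

section Brzozowski

variable {m n : ℕ} [NeZero m] [NeZero n]

theorem dfaW1_start (h : 0 < m) : (dfaW1 m h).start = 0 := rfl

theorem dfaW1_step_a (h : 0 < m) (i : Fin m) : (dfaW1 m h).step i 0 = i + 1 := by
  ext
  simp [dfaW1, Fin.val_add]

theorem dfaW1_step_b_one (h : 0 < m) : (dfaW1 m h).step 1 1 = 0 := by
  ext
  simp only [dfaW1, Fin.val_one', Fin.val_zero]
  split_ifs <;> simp_all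
  have := Nat.mod_le 1 m
  omega

theorem dfaW1_accept (h : 0 < m) : (dfaW1 m h).accept = {-1} := by
  ext i
  simp only [dfaW1, mem_singleton_iff, Fin.ext_iff, Fin.val_neg_one_of_neZero]

theorem dfaW2_start (h : 0 < n) : (dfaW2 n h).start = 0 := rfl

theorem dfaW2_step_a (h : 0 < n) (j : Fin n) : (dfaW2 n h).step j 0 = j + 1 := by
  ext
  simp [dfaW2, Fin.val_add]

theorem dfaW2_step_b_of_ne_one (h : 0 < n) {j : Fin n} (hj : j ≠ 1) :
    (dfaW2 n h).step j 1 = j := by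
  have hj' : j.val ≠ 1 := fun h1 => hj (by ext; simp [h1, Nat.mod_eq_of_lt (h1 ▸ j.isLt)])
  ext
  simp [dfaW2, hj', Nat.mod_eq_of_lt j.isLt]

theorem image_dfaW2_step_a (h : 0 < n) (S : Set (Fin n)) :
    (fun j => (dfaW2 n h).step j 0) '' S = (1 : Fin n) +ᵥ S := by
  simp_rw [dfaW2_step_a, add_comm _ (1 : Fin n)]
  exact image_vadd (t := S) (a := (1 : Fin n))

theorem image_dfaW2_step_b_of_one_notMem (h : 0 < n) {S : Set (Fin n)} (hS : 1 ∉ S) :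
    (fun j => (dfaW2 n h).step j 1) '' S = S :=
  (image_congr fun _ hj => dfaW2_step_b_of_ne_one h (ne_of_mem_of_not_mem hj hS)).trans
    (image_id S)

variable (m n) in
def brzozowskiConcat : DFA (Fin 2) (Set (Fin m ⊕ Fin n)) :=
  (nfaConcat (dfaW1 m (NeZero.pos m)).toNFA (dfaW2 n (NeZero.pos n)).toNFA).toDFA

theorem brzozowskiConcat_start (hm : 2 ≤ m) :
    (brzozowskiConcat m n).start = concatState 0 ∅ :=
  nfaConcat_toDFA_start _ _ (by rw [dfaW1_start, dfaW1_accept]; exact Fin.zero_ne_neg_one hm)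

theorem brzozowskiConcat_step_a {i : Fin m} (hi : i + 1 ≠ -1) (S : Set (Fin n)) :
    (brzozowskiConcat m n).step (concatState i S) 0 =
      concatState (i + 1) ((1 : Fin n) +ᵥ S) := by
  simp [brzozowskiConcat, nfaConcat_toDFA_step_concatState, dfaW1_step_a, dfaW1_accept,
    image_dfaW2_step_a, hi]

theorem brzozowskiConcat_step_a_of_add_one_eq {i : Fin m} (hi : i + 1 = -1) (S : Set (Fin n)) :
    (brzozowskiConcat m n).step (concatState i S) 0 =
      concatState (-1) (insert 0 ((1 : Fin n) +ᵥ S)) := by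
  simp [brzozowskiConcat, nfaConcat_toDFA_step_concatState, dfaW1_step_a, dfaW1_accept,
    image_dfaW2_step_a, dfaW2_start, hi]

theorem brzozowskiConcat_step_b_one (hm : 2 ≤ m) {S : Set (Fin n)} (hS : 1 ∉ S) :
    (brzozowskiConcat m n).step (concatState 1 S) 1 = concatState 0 S := by
  simp [brzozowskiConcat, nfaConcat_toDFA_step_concatState, dfaW1_step_b_one, dfaW1_accept,
    image_dfaW2_step_b_of_one_notMem _ hS, show m ≠ 1 by omega]

end Brzozowski

section Accessibility

variable {m n : ℕ} [NeZero m] [NeZero n]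

namespace DFA.IsAccessible

theorem brzozowskiConcat_natCast_of_zero {W : Set (Fin n)}
    (hW : (brzozowskiConcat m n).IsAccessible (concatState 0 W)) {k : ℕ} (hk : k + 2 ≤ m) :
    (brzozowskiConcat m n).IsAccessible (concatState (k : Fin m) ((k : Fin n) +ᵥ W)) := by
  induction k with
  | zero => simpa using hW
  | succ k ih =>
    have hstep := (ih (by omega)).step 0
    rwa [brzozowskiConcat_step_a (by exact_mod_cast Fin.natCast_ne_neg_one (k := k + 1) hk),
      vadd_vadd, add_comm (1 : Fin n), ← Nat.cast_succ, ← Nat.cast_succ] at hstep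

theorem brzozowskiConcat_neg_one_of_neg_two {S : Set (Fin n)}
    (h : (brzozowskiConcat m n).IsAccessible (concatState (-2) ((-1 : Fin n) +ᵥ (S \ {0}))))
    (hS : 0 ∈ S) : (brzozowskiConcat m n).IsAccessible (concatState (-1) S) := by
  have hstep := h.step 0
  rwa [brzozowskiConcat_step_a_of_add_one_eq (by ring), vadd_neg_vadd, insert_sdiff_singleton,
    insert_eq_of_mem hS] at hstep

theorem brzozowskiConcat_zero_of_neg_one (hm : 2 ≤ m) {V : Set (Fin n)}
    (h : (brzozowskiConcat m n).IsAccessible (concatState (-1) ((-1 : Fin n) +ᵥ V))) :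
    (brzozowskiConcat m n).IsAccessible (concatState 0 V) := by
  have hstep := h.step 0
  rwa [brzozowskiConcat_step_a (by simpa using Fin.zero_ne_neg_one hm), neg_add_cancel,
    vadd_neg_vadd] at hstep

theorem brzozowskiConcat_zero_of_zero (hm : 3 ≤ m) {V : Set (Fin n)}
    (h : (brzozowskiConcat m n).IsAccessible (concatState 0 ((-1 : Fin n) +ᵥ V)))
    (hV : 1 ∉ V) : (brzozowskiConcat m n).IsAccessible (concatState 0 V) := by
  have hstep := (h.step 0).step 1
  rwa [brzozowskiConcat_step_a (by simpa using Fin.natCast_ne_neg_one (k := 1) hm), zero_add,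
    vadd_neg_vadd, brzozowskiConcat_step_b_one (by omega) hV] at hstep

end DFA.IsAccessible

theorem brzozowskiConcat_isAccessible_zero (hm : 3 ≤ m) {k : ℕ}
    (hlast : ∀ U : Set (Fin n), 0 ∈ U → U.ncard = k →
      (brzozowskiConcat m n).IsAccessible (concatState (-1) U))
    (t : ℕ) {V : Set (Fin n)} (hV : V.ncard = k) (ht : (t : Fin n) + 1 ∈ V) :
    (brzozowskiConcat m n).IsAccessible (concatState 0 V) := by
  have of_one_mem {V : Set (Fin n)} (hV : V.ncard = k) (h1 : (1 : Fin n) ∈ V) :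
      (brzozowskiConcat m n).IsAccessible (concatState 0 V) :=
    (hlast _ (by simpa [mem_vadd_set_iff_neg_vadd_mem] using h1)
      (by rw [ncard_vadd_set, hV])).brzozowskiConcat_zero_of_neg_one (by omega)
  induction t generalizing V with
  | zero => exact of_one_mem hV (by simpa using ht)
  | succ t ih =>
    by_cases h1 : (1 : Fin n) ∈ V
    · exact of_one_mem hV h1
    · refine (ih (by rw [ncard_vadd_set, hV]) ?_).brzozowskiConcat_zero_of_zero hm h1
      rw [mem_vadd_set_iff_neg_vadd_mem, neg_neg, vadd_eq_add]
      convert ht using 1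
      push_cast
      ring

theorem brzozowskiConcat_isAccessible (hm : 3 ≤ m) (i : Fin m) (S : Set (Fin n))
    (hvalid : i = -1 → 0 ∈ S) : (brzozowskiConcat m n).IsAccessible (concatState i S) := by
  induction hk : S.ncard generalizing i S with
  | zero =>
    obtain rfl : S = ∅ := (ncard_eq_zero).1 hk
    have hi : i.val + 2 ≤ m := by
      have := Fin.eq_neg_one_iff.not.1 fun h => hvalid h
      omega
    have hstart : (brzozowskiConcat m n).IsAccessible (concatState 0 ∅) :=
      brzozowskiConcat_start (m := m) (n := n) (by omega) ▸ DFA.isAccessible_start _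
    simpa using hstart.brzozowskiConcat_natCast_of_zero hi
  | succ k ih =>
    have hlast (U : Set (Fin n)) (hU : 0 ∈ U) (hUk : U.ncard = k + 1) :
        (brzozowskiConcat m n).IsAccessible (concatState (-1) U) := by
      refine (ih _ _ (fun h => ?_) ?_).brzozowskiConcat_neg_one_of_neg_two hU
      · exact absurd (by linear_combination -h) (Fin.zero_ne_neg_one (by omega))
      · rw [ncard_vadd_set, ncard_sdiff_singleton_of_mem hU, hUk, Nat.add_sub_cancel]
    by_cases hi : i = -1
    · exact hi ▸ hlast S (hvalid hi) hk
    · have hi : i.val + 2 ≤ m := by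
        have := Fin.eq_neg_one_iff.not.1 hi
        omega
      obtain ⟨v, hv⟩ : S.Nonempty := nonempty_of_ncard_ne_zero (by omega)
      have hV : (brzozowskiConcat m n).IsAccessible (concatState 0 (-(i.val : Fin n) +ᵥ S)) :=
        brzozowskiConcat_isAccessible_zero hm hlast (v - i.val - 1).val
          (by rw [ncard_vadd_set, hk]) (by simpa [mem_vadd_set_iff_neg_vadd_mem] using hv)
      simpa using hV.brzozowskiConcat_natCast_of_zero hi

end Accessibility

/-- In the DFA obtained by the subset construction from the concatenation NFA `A_1·A_2`
of the two-letter Brzozowski pair, every valid state `(p_i, S)` — i.e. every subset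
`{p_i} ∪ {q_j : j ∈ S}` with `q_0 ∈ S` whenever `i = m−1` — is accessible from the
initial state. -/
theorem two_letter_valid_states_accessible (m n : ℕ) (hm : 3 ≤ m) (hn : 3 ≤ n)
    (i : Fin m) (S : Set (Fin n)) (hvalid : i.val = m - 1 → (⟨0, by omega⟩ : Fin n) ∈ S) :
    ∃ w : List (Fin 2),
      (nfaConcat (dfaW1 m (by omega)).toNFA (dfaW2 n (by omega)).toNFA).toDFA.eval w =
        {Sum.inl i} ∪ Sum.inr '' S := by
  have : NeZero m := ⟨by omega⟩
  have : NeZero n := ⟨by omega⟩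
  exact brzozowskiConcat_isAccessible hm i S fun h => hvalid (Fin.eq_neg_one_iff.1 h)
end
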